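/- arXiv:1907.09611 — 9 statements merged into one kernel-verified Lean document; each statement's English description precedes it below -/
import Mathlib

section
/- Let $(\Theta, \mathcal{A}, \Pi)$ be a probability space, and for each $n$ let $f_n : \Theta \to \mathbb{R}$ be measurable with $z_n = \int_\Theta \exp(-n f_n(\theta)) \Pi(d\theta) < \infty$. Define $\Pi_n(d\theta) = \exp(-n f_n(\theta)) \Pi(d\theta)/z_n$. Suppose $\theta_0 \in \Theta$ and $f : \Theta \to \mathbb{R}$ satisfy: (1) $f_n(\theta) \to f(\theta)$ for all $\theta$; (2) $\Pi(A_\epsilon) > 0$ for all $\epsilon > 0$, where $A_\epsilon = \{\theta : f(\theta) < f(\theta_0) + \epsilon\}$; and (3) $\liminf_n \inf_{\theta \in A_\epsilon^c} f_n(\theta) > f(\theta_0)$ for all $\epsilon > 0$. Then $\Pi_n(A_\epsilon) \to 1$ as $n \to \infty$ for every $\epsilon > 0$. -/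
/-! Fix `ε` and take `β > f θ0` from the separation condition. Off the sublevel set `A`,
`exp (-n fₙ) ≤ exp (-n β)`, so the mass of `Aᶜ` is at most `exp (-n β)`. On the part of `A` where
`f < β`, which has positive prior mass, `n (β - fₙ) → ∞` pointwise, so by Fatou's lemma
`exp (n β) ∫_A exp (-n fₙ) dΠ → ∞`. Hence the mass of `Aᶜ` is negligible against that of `A`. -/

open MeasureTheory Filter
open scoped Topology ENNReal

section Integral

variable {α : Type*} [MeasurableSpace α] {μ : Measure α} {s : Set α}

theorem tendsto_lintegral_top_of_tendsto_top {g : ℕ → α → ℝ≥0∞}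
    (hg : ∀ n, AEMeasurable (g n) μ) (hs : MeasurableSet s) (hμs : μ s ≠ 0)
    (htop : ∀ x ∈ s, Tendsto (g · x) atTop (𝓝 ∞)) :
    Tendsto (fun n => ∫⁻ x, g n x ∂μ) atTop (𝓝 ∞) := by
  have hliminf : ∞ ≤ liminf (fun n => ∫⁻ x, g n x ∂μ) atTop := calc
    ∞ = ∫⁻ _ in s, ∞ ∂μ := by rw [setLIntegral_const, ENNReal.top_mul hμs]
    _ ≤ ∫⁻ x in s, liminf (g · x) atTop ∂μ :=
      lintegral_mono_ae <| (ae_restrict_mem hs).mono fun x hx => (htop x hx).liminf_eq.ge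
    _ ≤ ∫⁻ x, liminf (g · x) atTop ∂μ := setLIntegral_le_lintegral s _
    _ ≤ _ := lintegral_liminf_le' hg
  rw [top_le_iff] at hliminf
  exact ENNReal.tendsto_nhds_top fun k =>
    eventually_lt_of_lt_liminf (hliminf ▸ ENNReal.natCast_lt_top k)

theorem tendsto_integral_atTop_of_tendsto_atTop {G : ℕ → α → ℝ} (hG : ∀ n, 0 ≤ᵐ[μ] G n)
    (hint : ∀ n, Integrable (G n) μ) (hs : MeasurableSet s) (hμs : μ s ≠ 0)
    (htop : ∀ x ∈ s, Tendsto (G · x) atTop atTop) :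
    Tendsto (fun n => ∫ x, G n x ∂μ) atTop atTop := by
  rw [← ENNReal.tendsto_ofReal_nhds_top]
  simp_rw [ofReal_integral_eq_lintegral_ofReal (hint _) (hG _)]
  exact tendsto_lintegral_top_of_tendsto_top (fun n => (hint n).aemeasurable.ennreal_ofReal)
    hs hμs fun x hx => ENNReal.tendsto_ofReal_nhds_top.2 (htop x hx)

theorem tendsto_exp_mul_integral_exp_neg_mul_atTop {g : ℕ → α → ℝ} {f : α → ℝ} {β : ℝ}
    (hint : ∀ n : ℕ, Integrable (fun x => Real.exp (-(n : ℝ) * g n x)) μ)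
    (hs : MeasurableSet s) (hμs : μ s ≠ 0) (hlt : ∀ x ∈ s, f x < β)
    (hconv : ∀ x ∈ s, Tendsto (g · x) atTop (𝓝 (f x))) :
    Tendsto (fun n : ℕ => Real.exp (n * β) * ∫ x, Real.exp (-(n : ℝ) * g n x) ∂μ)
      atTop atTop := by
  simp_rw [← integral_const_mul]
  refine tendsto_integral_atTop_of_tendsto_atTop (fun n => ae_of_all _ fun x => by positivity)
    (fun n => (hint n).const_mul _) hs hμs fun x hx => ?_
  simp_rw [← Real.exp_add, neg_mul, ← sub_eq_add_neg, ← mul_sub]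
  exact Real.tendsto_exp_atTop.comp <| Tendsto.atTop_mul_pos (sub_pos.2 (hlt x hx))
    tendsto_natCast_atTop_atTop (tendsto_const_nhds.sub (hconv x hx))

theorem setIntegral_exp_neg_mul_le [IsZeroOrProbabilityMeasure μ] {g : α → ℝ} {t β : ℝ}
    (ht : 0 ≤ t) (hg : ∀ x ∈ s, β ≤ g x) :
    ∫ x in s, Real.exp (-t * g x) ∂μ ≤ (Real.exp (t * β))⁻¹ := calc
  _ ≤ (Real.exp (t * β))⁻¹ * μ.real s :=
      (le_abs_self _).trans <| norm_setIntegral_le_of_norm_le_const (measure_lt_top _ _)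
        fun x hx => (Real.norm_of_nonneg (Real.exp_pos _).le).trans_le <| by
          rw [← Real.exp_neg, Real.exp_le_exp, neg_mul_eq_neg_mul]
          exact mul_le_mul_of_nonpos_left (hg x hx) (neg_nonpos.2 ht)
  _ ≤ _ := mul_le_of_le_one_right (inv_nonneg.2 (Real.exp_pos _).le) measureReal_le_one

end Integral

section Ratio

variable {ι : Type*} {l : Filter ι} {a b c : ι → ℝ}

theorem Filter.Tendsto.div_add_nhds_one (hba : Tendsto (fun i => b i / a i) l (𝓝 0))
    (ha : ∀ᶠ i in l, a i ≠ 0) :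
    Tendsto (fun i => a i / (a i + b i)) l (𝓝 1) := by
  have h : Tendsto (fun i => (1 + b i / a i)⁻¹) l (𝓝 1) := by
    simpa using (tendsto_const_nhds.add hba).inv₀ (by norm_num : (1 : ℝ) + 0 ≠ 0)
  refine h.congr' (ha.mono fun i hi => ?_)
  rw [one_add_div hi, inv_div]

theorem tendsto_div_add_nhds_one_of_le_inv (hb0 : ∀ᶠ i in l, 0 ≤ b i)
    (hbc : ∀ᶠ i in l, b i ≤ (c i)⁻¹) (hca : Tendsto (fun i => c i * a i) l atTop) :
    Tendsto (fun i => a i / (a i + b i)) l (𝓝 1) := by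
  have ha : ∀ᶠ i in l, 0 < a i := by
    filter_upwards [hca.eventually_gt_atTop 0, hb0, hbc] with i hca hb0 hbc
    exact pos_of_mul_pos_right hca (inv_nonneg.1 (hb0.trans hbc))
  refine Tendsto.div_add_nhds_one ?_ (ha.mono fun i hi => hi.ne')
  refine tendsto_of_tendsto_of_tendsto_of_le_of_le' tendsto_const_nhds
    (tendsto_inv_atTop_zero.comp hca) ?_ ?_
  · filter_upwards [hb0, ha] with i hb0 ha using div_nonneg hb0 ha.le
  · filter_upwards [hbc, ha] with i hbc ha
    calc b i / a i ≤ (c i)⁻¹ / a i := div_le_div_of_nonneg_right hbc ha.le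
      _ = (c i * a i)⁻¹ := by rw [mul_inv, div_eq_mul_inv]

end Ratio

theorem generalized_posterior_concentration_sublevel
    {Θ : Type*} [MeasurableSpace Θ] (P : Measure Θ) [IsProbabilityMeasure P]
    (fn : ℕ → Θ → ℝ) (hmeas : ∀ n, Measurable (fn n))
    (hint : ∀ n : ℕ, Integrable (fun θ => Real.exp (-(n : ℝ) * fn n θ)) P)
    (θ0 : Θ) (f : Θ → ℝ)
    (hconv : ∀ θ, Tendsto (fun n => fn n θ) atTop (𝓝 (f θ)))
    (hprior : ∀ ε > (0:ℝ), 0 < P {θ | f θ < f θ0 + ε})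
    (hsep : ∀ ε > (0:ℝ), ∃ β, f θ0 < β ∧
      ∀ᶠ n in atTop, ∀ θ, ¬ f θ < f θ0 + ε → β ≤ fn n θ) :
    ∀ ε > (0:ℝ), Tendsto (fun n : ℕ =>
        (∫ θ in {θ | f θ < f θ0 + ε}, Real.exp (-(n : ℝ) * fn n θ) ∂P) /
        ∫ θ, Real.exp (-(n : ℝ) * fn n θ) ∂P) atTop (𝓝 1) := by
  intro ε hε
  have hf : Measurable f := measurable_of_tendsto_metrizable hmeas (tendsto_pi_nhds.2 hconv)
  set A := {θ | f θ < f θ0 + ε}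
  have hA : MeasurableSet A := measurableSet_lt hf measurable_const
  obtain ⟨β, hβ, hsepβ⟩ := hsep ε hε
  set c := min ε (β - f θ0)
  have hc : 0 < c := lt_min hε (sub_pos.2 hβ)
  have hBA : {θ | f θ < f θ0 + c} ⊆ A := fun θ (hθ : f θ < f θ0 + c) =>
    show f θ < f θ0 + ε by linarith [min_le_left ε (β - f θ0)]
  have hmassA := tendsto_exp_mul_integral_exp_neg_mul_atTop (μ := P.restrict A) (β := β)
    (fun n => (hint n).restrict) (measurableSet_lt hf measurable_const)
    (by rw [Measure.restrict_eq_self _ hBA]; exact (hprior c hc).ne')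
    (fun θ (hθ : f θ < f θ0 + c) => by linarith [min_le_right ε (β - f θ0)])
    fun θ _ => hconv θ
  simp_rw [← integral_add_compl hA (hint _)]
  exact tendsto_div_add_nhds_one_of_le_inv
    (Eventually.of_forall fun n => setIntegral_nonneg hA.compl fun _ _ => (Real.exp_pos _).le)
    (hsepβ.mono fun n hn => setIntegral_exp_neg_mul_le n.cast_nonneg hn) hmassA
end

section
/- Let $(\Theta, d)$ be a metric space with Borel sigma-algebra, $\Pi$ a probability measure, $f_n : \Theta \to \mathbb{R}$ measurable with $z_n = \int \exp(-n f_n) d\Pi < \infty$, and $\Pi_n(d\theta) = \exp(-n f_n(\theta))\Pi(d\theta)/z_n$. Fix $\theta_0$ and write $N_\epsilon = \{\theta : d(\theta, \theta_0) < \epsilon\}$. Suppose $\Pi(N_\epsilon) > 0$ for all $\epsilon > 0$, $f_n \to f$ pointwise, $f$ is continuous at $\theta_0$, and $\liminf_n \inf_{\theta \in N_\epsilon^c} f_n(\theta) > f(\theta_0)$ for all $\epsilon > 0$. Then $\Pi_n(N_\epsilon) \to 1$ for every $\epsilon > 0$. -/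
/-!
Fix `ε` and a level `β > f θ₀` with `β ≤ f n` off `N_ε` for all large `n`. Off `N_ε` the tilted
weight `exp (n β) exp (-n f n)` is at most `1`, so the tilted mass of `N_εᶜ` stays bounded.
Near `θ₀` we have `f < β`, so on a small ball of positive prior mass the tilted weight
`exp (n (β - f n))` tends to infinity pointwise, and by Fatou's lemma so does its integral.
The tilted mass of `N_ε` therefore dominates, and its share of the total tends to `1`.
-/

open MeasureTheory Filter
open scoped Topology ENNReal

section Divergence

variable {α : Type*} [MeasurableSpace α] {μ : Measure α}

theorem tendsto_lintegral_top_of_ae_tendsto_top {g : ℕ → α → ℝ≥0∞}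
    (hg : ∀ n, AEMeasurable (g n) μ) (hlim : ∀ᵐ x ∂μ, Tendsto (g · x) atTop (𝓝 ∞))
    (hμ : μ ≠ 0) : Tendsto (fun n => ∫⁻ x, g n x ∂μ) atTop (𝓝 ∞) := by
  refine tendsto_of_le_liminf_of_limsup_le ?_ le_top
  calc ∞ = ∫⁻ x, liminf (g · x) atTop ∂μ := by
        rw [lintegral_congr_ae (hlim.mono fun x hx => hx.liminf_eq), lintegral_const,
          ENNReal.top_mul (Measure.measure_univ_ne_zero.2 hμ)]
    _ ≤ liminf (fun n => ∫⁻ x, g n x ∂μ) atTop := lintegral_liminf_le' hg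

theorem tendsto_integral_atTop_of_ae_tendsto_atTop {h : ℕ → α → ℝ}
    (hint : ∀ n, Integrable (h n) μ) (hnonneg : ∀ n, 0 ≤ᵐ[μ] h n)
    (hlim : ∀ᵐ x ∂μ, Tendsto (h · x) atTop atTop) (hμ : μ ≠ 0) :
    Tendsto (fun n => ∫ x, h n x ∂μ) atTop atTop := by
  rw [← ENNReal.tendsto_ofReal_nhds_top]
  simp_rw [ofReal_integral_eq_lintegral_ofReal (hint _) (hnonneg _)]
  exact tendsto_lintegral_top_of_ae_tendsto_top
    (fun n => (hint n).aemeasurable.ennreal_ofReal)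
    (hlim.mono fun x hx => ENNReal.tendsto_ofReal_nhds_top.2 hx) hμ

end Divergence

section Tilting

variable {α : Type*} [MeasurableSpace α] {μ : Measure α} {s : Set α}

theorem tendsto_exp_mul_setIntegral_exp_neg_mul_atTop {g : ℕ → α → ℝ} {f : α → ℝ} {β : ℝ}
    (hs : MeasurableSet s) (hμs : μ s ≠ 0)
    (hint : ∀ n : ℕ, IntegrableOn (fun x => Real.exp (-(n : ℝ) * g n x)) s μ)
    (hconv : ∀ x ∈ s, Tendsto (g · x) atTop (𝓝 (f x))) (hlt : ∀ x ∈ s, f x < β) :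
    Tendsto (fun n : ℕ => Real.exp (n * β) * ∫ x in s, Real.exp (-(n : ℝ) * g n x) ∂μ)
      atTop atTop := by
  have htilt : ∀ (n : ℕ) x, Real.exp (n * β) * Real.exp (-(n : ℝ) * g n x) =
      Real.exp (n * (β - g n x)) := fun n x => by rw [← Real.exp_add]; ring_nf
  simp_rw [← integral_const_mul, htilt]
  refine tendsto_integral_atTop_of_ae_tendsto_atTop (fun n => ?_)
    (fun n => ae_of_all _ fun x => (Real.exp_pos _).le) ?_ (by rwa [Ne, Measure.restrict_eq_zero])
  · simpa only [htilt] using (hint n).const_mul (Real.exp (n * β))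
  · refine (ae_restrict_iff' hs).2 (ae_of_all _ fun x hx => ?_)
    exact Real.tendsto_exp_atTop.comp <| Tendsto.atTop_mul_pos (sub_pos.2 (hlt x hx))
      tendsto_natCast_atTop_atTop (tendsto_const_nhds.sub (hconv x hx))

theorem exp_mul_setIntegral_exp_neg_mul_le_measureReal {β t : ℝ} {g : α → ℝ}
    (ht : 0 ≤ t) (hμs : μ s < ∞) (hge : ∀ x ∈ s, β ≤ g x) :
    Real.exp (t * β) * ∫ x in s, Real.exp (-t * g x) ∂μ ≤ μ.real s := by
  rw [← integral_const_mul]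
  refine (Real.le_norm_self _).trans ((norm_setIntegral_le_of_norm_le_const hμs fun x hx => ?_).trans
    (one_mul _).le)
  rw [← Real.exp_add, Real.norm_eq_abs, Real.abs_exp, Real.exp_le_one_iff]
  nlinarith [hge x hx]

end Tilting

theorem tendsto_div_add_nhds_one_of_mul_tendsto_atTop {ι : Type*} {l : Filter ι}
    {c N R : ι → ℝ} {C : ℝ} (hc : ∀ i, 0 < c i) (hR : ∀ i, 0 ≤ R i)
    (hcR : ∀ᶠ i in l, c i * R i ≤ C) (hcN : Tendsto (fun i => c i * N i) l atTop) :
    Tendsto (fun i => N i / (N i + R i)) l (𝓝 1) := by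
  have hN : ∀ᶠ i in l, 0 < N i :=
    (hcN.eventually_gt_atTop 0).mono fun i hi => pos_of_mul_pos_right hi (hc i).le
  have hratio : Tendsto (fun i => R i / N i) l (𝓝 0) := by
    refine squeeze_zero' (hN.mono fun i hi => div_nonneg (hR i) hi.le) ?_
      (hcN.inv_tendsto_atTop.const_mul C |>.trans (by rw [mul_zero]))
    filter_upwards [hN, hcR] with i hNi hcRi
    rw [← mul_div_mul_left (R i) (N i) (hc i).ne', Pi.inv_apply, ← div_eq_mul_inv]
    exact div_le_div_of_nonneg_right hcRi (mul_pos (hc i) hNi).le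
  have hlim : Tendsto (fun i => (1 + R i / N i)⁻¹) l (𝓝 1) := by
    simpa using (tendsto_const_nhds.add hratio).inv₀ (by norm_num : (1 : ℝ) + 0 ≠ 0)
  refine hlim.congr' (hN.mono fun i hi => ?_)
  rw [one_add_div hi.ne', inv_div]

theorem posterior_concentration_metric_general
    {Θ : Type*} [MetricSpace Θ] [MeasurableSpace Θ] [BorelSpace Θ]
    (P : Measure Θ) [IsProbabilityMeasure P]
    (fn : ℕ → Θ → ℝ)
    (hint : ∀ n : ℕ, Integrable (fun θ => Real.exp (-(n : ℝ) * fn n θ)) P)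
    (θ0 : Θ) (f : Θ → ℝ)
    (hprior : ∀ ε > (0:ℝ), 0 < P (Metric.ball θ0 ε))
    (hconv : ∀ θ, Tendsto (fun n => fn n θ) atTop (𝓝 (f θ)))
    (hcont : ContinuousAt f θ0)
    (hsep : ∀ ε > (0:ℝ), ∃ β, f θ0 < β ∧
      ∀ᶠ n in atTop, ∀ θ, θ ∉ Metric.ball θ0 ε → β ≤ fn n θ) :
    ∀ ε > (0:ℝ), Tendsto (fun n : ℕ =>
        (∫ θ in Metric.ball θ0 ε, Real.exp (-(n : ℝ) * fn n θ) ∂P) /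
        ∫ θ, Real.exp (-(n : ℝ) * fn n θ) ∂P) atTop (𝓝 1) := by
  intro ε hε
  obtain ⟨β, hβ, hfar⟩ := hsep ε hε
  obtain ⟨δ, hδ, hnear⟩ := Metric.eventually_nhds_iff.1 (hcont.eventually (eventually_lt_nhds hβ))
  have hsmall : Metric.ball θ0 (min δ ε) ⊆ Metric.ball θ0 ε :=
    Metric.ball_subset_ball (min_le_right _ _)
  have hinside : Tendsto (fun n : ℕ => Real.exp (n * β) *
      ∫ θ in Metric.ball θ0 ε, Real.exp (-(n : ℝ) * fn n θ) ∂P) atTop atTop := by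
    refine tendsto_atTop_mono (fun n => mul_le_mul_of_nonneg_left ?_ (Real.exp_pos _).le)
      (tendsto_exp_mul_setIntegral_exp_neg_mul_atTop measurableSet_ball
        (hprior _ (lt_min hδ hε)).ne' (fun n => (hint n).integrableOn) (fun θ _ => hconv θ)
        fun θ hθ => hnear (lt_of_lt_of_le hθ (min_le_left _ _)))
    exact setIntegral_mono_set (hint n).integrableOn
      (ae_of_all _ fun θ => (Real.exp_pos _).le) hsmall.eventuallyLE
  have houtside : ∀ᶠ n : ℕ in atTop, Real.exp (n * β) *
      ∫ θ in (Metric.ball θ0 ε)ᶜ, Real.exp (-(n : ℝ) * fn n θ) ∂P ≤ 1 :=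
    hfar.mono fun n hn => (exp_mul_setIntegral_exp_neg_mul_le_measureReal n.cast_nonneg
      (measure_lt_top _ _) hn).trans measureReal_le_one
  refine (tendsto_div_add_nhds_one_of_mul_tendsto_atTop (fun n => Real.exp_pos _)
    (fun n => setIntegral_nonneg measurableSet_ball.compl fun θ _ => (Real.exp_pos _).le)
    houtside hinside).congr fun n => ?_
  rw [integral_add_compl measurableSet_ball (hint n)]

theorem posterior_concentration_metric
    {Θ : Type*} [MetricSpace Θ] [MeasurableSpace Θ] [BorelSpace Θ]
    (P : Measure Θ) [IsProbabilityMeasure P]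
    (fn : ℕ → Θ → ℝ) (hmeas : ∀ n, Measurable (fn n))
    (hint : ∀ n : ℕ, Integrable (fun θ => Real.exp (-(n : ℝ) * fn n θ)) P)
    (θ0 : Θ) (f : Θ → ℝ)
    (hprior : ∀ ε > (0:ℝ), 0 < P (Metric.ball θ0 ε))
    (hconv : ∀ θ, Tendsto (fun n => fn n θ) atTop (𝓝 (f θ)))
    (hcont : ContinuousAt f θ0)
    (hsep : ∀ ε > (0:ℝ), ∃ β, f θ0 < β ∧
      ∀ᶠ n in atTop, ∀ θ, θ ∉ Metric.ball θ0 ε → β ≤ fn n θ) :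
    ∀ ε > (0:ℝ), Tendsto (fun n : ℕ =>
        (∫ θ in Metric.ball θ0 ε, Real.exp (-(n : ℝ) * fn n θ) ∂P) /
        ∫ θ, Real.exp (-(n : ℝ) * fn n θ) ∂P) atTop (𝓝 1) :=
  posterior_concentration_metric_general P fn hint θ0 f hprior hconv hcont hsep
end

section
/- Let $\Theta \subseteq \mathbb{R}^D$, let $E \subseteq \Theta$ be convex and open in $\mathbb{R}^D$, and $\theta_0 \in E$. Let $f_n : \Theta \to \mathbb{R}$ be convex functions with $f_n \to f$ pointwise on $E$. If $f'$ exists in a neighborhood of $\theta_0$, $f'(\theta_0) = 0$, and the Hessian $f''(\theta_0)$ exists and is positive definite, then $f(\theta) > f(\theta_0)$ for all $\theta \in E \setminus \{\theta_0\}$. -/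
/-!
The limit `f` is convex on `E`, being a pointwise limit of convex functions. Restrict it to the
segment from `θ0` to `θ`, giving a convex `g` on `[0, 1]` with `g' 0 = 0`. Positive definiteness of
the Hessian makes `g'` increase strictly at `0`, so `g' t > 0` for some small `t > 0`. Convexity then
gives `g 0 ≤ g t` (tangent at `0`) and `g t < g 1` (tangent at `t`).
-/

open Filter Set
open scoped Topology

section Convexity

variable {V : Type*} [AddCommGroup V] [Module ℝ V]

theorem convexOn_of_subset_of_le {Θ s : Set V} {g : V → ℝ}
    (hg : ∀ x ∈ Θ, ∀ y ∈ Θ, ∀ t ∈ Icc (0 : ℝ) 1, t • x + (1 - t) • y ∈ Θ →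
      g (t • x + (1 - t) • y) ≤ t * g x + (1 - t) * g y)
    (hs : Convex ℝ s) (hsΘ : s ⊆ Θ) : ConvexOn ℝ s g := by
  refine ⟨hs, fun x hx y hy a b ha hb hab => ?_⟩
  obtain rfl : b = 1 - a := by linarith
  exact hg x (hsΘ hx) y (hsΘ hy) a ⟨ha, by linarith⟩ (hsΘ (hs hx hy ha hb hab))

theorem ConvexOn.of_tendsto {ι : Type*} {l : Filter ι} [l.NeBot] {s : Set V}
    {F : ι → V → ℝ} {f : V → ℝ} (hF : ∀ᶠ i in l, ConvexOn ℝ s (F i))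
    (hlim : ∀ x ∈ s, Tendsto (F · x) l (𝓝 (f x))) : ConvexOn ℝ s f := by
  obtain ⟨i, hi⟩ := hF.exists
  refine ⟨hi.1, fun x hx y hy a b ha hb hab => ?_⟩
  exact le_of_tendsto_of_tendsto (hlim _ (hi.1 hx hy ha hb hab))
    (((hlim x hx).const_mul a).add ((hlim y hy).const_mul b))
    (hF.mono fun i hi => hi.2 hx hy ha hb hab)

end Convexity

theorem ConvexOn.lt_of_hasDerivAt_zero_of_hasDerivAt_pos {s : Set ℝ} {g : ℝ → ℝ}
    (hg : ConvexOn ℝ s g) {a b c g' : ℝ} (ha : a ∈ s) (hc : c ∈ s) (hab : a < b) (hbc : b < c)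
    (hga : HasDerivAt g 0 a) (hgb : HasDerivAt g g' b) (hg' : 0 < g') : g a < g c := by
  have hb : b ∈ s := hg.1.ordConnected.out ha hc ⟨hab.le, hbc.le⟩
  have hab' : g a ≤ g b :=
    (slope_nonneg_iff_of_le hab.le).mp (hg.le_slope_of_hasDerivAt ha hb hab hga)
  have hbc' : g b < g c :=
    (slope_pos_iff_of_le hbc.le).mp (hg'.trans_le (hg.le_slope_of_hasDerivAt hb hc hbc hgb))
  exact hab'.trans_lt hbc'

theorem HasDerivAt.eventually_pos_nhdsGT {φ : ℝ → ℝ} {x c : ℝ} (h : HasDerivAt φ c x)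
    (hx : φ x = 0) (hc : 0 < c) : ∀ᶠ t in 𝓝[>] x, 0 < φ t := by
  have hslope : ∀ᶠ t in 𝓝[>] x, 0 < slope φ x t :=
    ((hasDerivAt_iff_tendsto_slope.mp h).mono_left (nhdsGT_le_nhdsNE x)).eventually
      (eventually_gt_nhds hc)
  filter_upwards [hslope, self_mem_nhdsWithin] with t hs (ht : x < t)
  simpa [hx] using (slope_pos_iff_of_le ht.le).mp hs

section LineMap

variable {V W : Type*} [NormedAddCommGroup V] [NormedSpace ℝ V]
  [NormedAddCommGroup W] [NormedSpace ℝ W] {f : V → W} {x y : V}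

theorem DifferentiableAt.hasDerivAt_fderiv_lineMap_apply
    (h : DifferentiableAt ℝ (fderiv ℝ f) x) :
    HasDerivAt (fun t : ℝ => fderiv ℝ f (AffineMap.lineMap x y t) (y - x))
      (fderiv ℝ (fderiv ℝ f) x (y - x) (y - x)) 0 := by
  have hx : x = AffineMap.lineMap x y (0 : ℝ) := (AffineMap.lineMap_apply_zero x y).symm
  simpa using (h.hasFDerivAt.comp_hasDerivAt_of_eq 0 AffineMap.hasDerivAt_lineMap hx).clm_apply
    (hasDerivAt_const 0 (y - x))

end LineMap

theorem limit_of_convex_strict_local_min_is_strict_global_min_general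
    {D : ℕ} (Θ E : Set (EuclideanSpace ℝ (Fin D))) (hEΘ : E ⊆ Θ)
    (hEconv : Convex ℝ E)
    (θ0 : EuclideanSpace ℝ (Fin D)) (hθ0 : θ0 ∈ E)
    (fn : ℕ → EuclideanSpace ℝ (Fin D) → ℝ) (f : EuclideanSpace ℝ (Fin D) → ℝ)
    (hconvex : ∀ (n : ℕ), ∀ x ∈ Θ, ∀ y ∈ Θ, ∀ t ∈ Set.Icc (0:ℝ) 1,
      t • x + (1 - t) • y ∈ Θ →
      fn n (t • x + (1 - t) • y) ≤ t * fn n x + (1 - t) * fn n y)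
    (hlim : ∀ θ ∈ E, Tendsto (fun n => fn n θ) atTop (𝓝 (f θ)))
    (hdiff : ∀ᶠ θ in 𝓝 θ0, DifferentiableAt ℝ f θ)
    (hgrad0 : fderiv ℝ f θ0 = 0)
    (hf'' : DifferentiableAt ℝ (fderiv ℝ f) θ0)
    (hposdef : ∀ v : EuclideanSpace ℝ (Fin D), v ≠ 0 →
      0 < fderiv ℝ (fderiv ℝ f) θ0 v v) :
    ∀ θ ∈ E, θ ≠ θ0 → f θ0 < f θ := by
  intro θ hθ hne
  have hfE : ConvexOn ℝ E f :=
    .of_tendsto (.of_forall fun n => convexOn_of_subset_of_le (hconvex n) hEconv hEΘ) hlim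
  have hc : Tendsto (AffineMap.lineMap θ0 θ) (𝓝 (0 : ℝ)) (𝓝 θ0) := by
    simpa using (AffineMap.lineMap_continuous (p := θ0) (q := θ)).tendsto (0 : ℝ)
  have hderiv_pos := (hf''.hasDerivAt_fderiv_lineMap_apply (y := θ)).eventually_pos_nhdsGT
    (by simp [hgrad0]) (hposdef _ (sub_ne_zero.2 hne))
  obtain ⟨t, hg't, hdiff_t, ht1, ht0⟩ := (hderiv_pos.and (((hc.eventually hdiff).filter_mono
    nhdsWithin_le_nhds).and (((eventually_lt_nhds one_pos).filter_mono nhdsWithin_le_nhds).and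
    self_mem_nhdsWithin))).exists
  have hg0 : HasDerivAt (f ∘ AffineMap.lineMap (k := ℝ) θ0 θ) 0 0 := by
    simpa [hgrad0] using hdiff.self_of_nhds.hasFDerivAt.comp_hasDerivAt_of_eq (0 : ℝ)
      AffineMap.hasDerivAt_lineMap (AffineMap.lineMap_apply_zero θ0 θ).symm
  simpa using (hfE.comp_affineMap (AffineMap.lineMap θ0 θ)).lt_of_hasDerivAt_zero_of_hasDerivAt_pos
    (a := 0) (c := 1) (by simpa using hθ0) (by simpa using hθ) ht0 ht1 hg0
    (hdiff_t.hasFDerivAt.comp_hasDerivAt t AffineMap.hasDerivAt_lineMap) hg't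

theorem limit_of_convex_strict_local_min_is_strict_global_min
    {D : ℕ} (Θ E : Set (EuclideanSpace ℝ (Fin D))) (hEΘ : E ⊆ Θ)
    (hEconv : Convex ℝ E) (hEopen : IsOpen E)
    (θ0 : EuclideanSpace ℝ (Fin D)) (hθ0 : θ0 ∈ E)
    (fn : ℕ → EuclideanSpace ℝ (Fin D) → ℝ) (f : EuclideanSpace ℝ (Fin D) → ℝ)
    (hconvex : ∀ (n : ℕ), ∀ x ∈ Θ, ∀ y ∈ Θ, ∀ t ∈ Set.Icc (0:ℝ) 1,
      t • x + (1 - t) • y ∈ Θ →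
      fn n (t • x + (1 - t) • y) ≤ t * fn n x + (1 - t) * fn n y)
    (hlim : ∀ θ ∈ E, Tendsto (fun n => fn n θ) atTop (𝓝 (f θ)))
    (hdiff : ∀ᶠ θ in 𝓝 θ0, DifferentiableAt ℝ f θ)
    (hgrad0 : fderiv ℝ f θ0 = 0)
    (hf'' : DifferentiableAt ℝ (fderiv ℝ f) θ0)
    (hposdef : ∀ v : EuclideanSpace ℝ (Fin D), v ≠ 0 →
      0 < fderiv ℝ (fderiv ℝ f) θ0 v v) :
    ∀ θ ∈ E, θ ≠ θ0 → f θ0 < f θ :=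
  limit_of_convex_strict_local_min_is_strict_global_min_general Θ E hEΘ hEconv θ0 hθ0 fn f hconvex
    hlim hdiff hgrad0 hf'' hposdef
end

section
/- Let $\Theta \subseteq \mathbb{R}^D$, let $E \subseteq \Theta$ be convex and open, and $\theta_0 \in E$. Let $f_n : \Theta \to \mathbb{R}$ be convex with $f_n \to f$ pointwise on $E$, and suppose $f(\theta) > f(\theta_0)$ for all $\theta \in E \setminus \{\theta_0\}$. Then for any $\epsilon > 0$, $\liminf_{n} \inf_{\theta \in \Theta \setminus B_\epsilon(\theta_0)} f_n(\theta) > f(\theta_0)$, where $B_\epsilon(\theta_0)$ is the Euclidean ball of radius $\epsilon$ around $\theta_0$. -/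
/-!
Convex functions converging pointwise on an open subset of a finite-dimensional space converge
locally uniformly: near each point they are eventually bounded above (by their values at the
vertices of a small simplex), hence below (by reflection through the centre), hence
equi-Lipschitz. So on a small sphere around `θ0` inside `E` the `fn` eventually exceed some level
`β > f θ0`, while `fn θ0 < β`; convexity along the ray from `θ0` through a point `θ` outside the
ball then forces `fn θ ≥ β`.
-/

open Filter Set Metric
open scoped Topology

variable {X : Type*} [NormedAddCommGroup X] [NormedSpace ℝ X]

lemma ConvexOn.two_mul_le_add_pointReflection {s : Set X} {f : X → ℝ} (hf : ConvexOn ℝ s f)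
    {x₀ x : X} (hx : x ∈ s) (hx' : Equiv.pointReflection x₀ x ∈ s) :
    2 * f x₀ ≤ f x + f (Equiv.pointReflection x₀ x) := by
  have h := hf.2 hx hx' (by norm_num : (0 : ℝ) ≤ 1 / 2) (by norm_num : (0 : ℝ) ≤ 1 / 2)
    (by norm_num)
  have hmid : (1 / 2 : ℝ) • x + (1 / 2 : ℝ) • Equiv.pointReflection x₀ x = x₀ := by
    rw [Equiv.pointReflection_apply, vsub_eq_sub, vadd_eq_add]
    module
  rw [hmid, smul_eq_mul, smul_eq_mul] at h
  linarith

lemma Convex.convexOn_of_tendsto {V ι : Type*} [AddCommGroup V] [Module ℝ V] {l : Filter ι}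
    [l.NeBot] {F : ι → V → ℝ} {f : V → ℝ} {s : Set V} (hs : Convex ℝ s)
    (hF : ∀ i, ConvexOn ℝ s (F i))
    (hlim : ∀ x ∈ s, Tendsto (fun i ↦ F i x) l (𝓝 (f x))) : ConvexOn ℝ s f := by
  refine ⟨hs, fun x hx y hy a b ha hb hab ↦ ?_⟩
  exact le_of_tendsto_of_tendsto' (hlim _ (hs hx hy ha hb hab))
    (((hlim x hx).const_smul a).add ((hlim y hy).const_smul b)) fun i ↦ (hF i).2 hx hy ha hb hab

theorem tendstoLocallyUniformlyOn_of_lipschitzOnWith {α β ι : Type*} [PseudoMetricSpace α]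
    [PseudoMetricSpace β] {l : Filter ι} {F : ι → α → β} {f : α → β} {s : Set α}
    (hf : ContinuousOn f s) (hlim : ∀ x ∈ s, Tendsto (fun i ↦ F i x) l (𝓝 (f x)))
    (hlip : ∀ x ∈ s, ∃ K, ∃ t ∈ 𝓝[s] x, ∀ᶠ i in l, LipschitzOnWith K (F i) t) :
    TendstoLocallyUniformlyOn F f l s := by
  rw [Metric.tendstoLocallyUniformlyOn_iff]
  intro ε hε x hx
  obtain ⟨K, t, ht, hK⟩ := hlip x hx
  set δ := ε / 3 / (K + 1)
  have hδ : 0 < δ := by positivity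
  have hKδ : K * δ ≤ ε / 3 := by
    rw [mul_div_left_comm]
    exact mul_le_of_le_one_right (by positivity) ((div_le_one (by positivity)).2 (by linarith))
  refine ⟨t ∩ ball x δ ∩ f ⁻¹' ball (f x) (ε / 3),
    inter_mem (inter_mem ht (mem_nhdsWithin_of_mem_nhds (ball_mem_nhds x hδ)))
      (hf x hx (ball_mem_nhds _ (by positivity))), ?_⟩
  filter_upwards [hK, (hlim x hx).eventually (ball_mem_nhds _ (by positivity : 0 < ε / 3))]
    with i hiK hix y ⟨⟨hyt, hyx⟩, hyf⟩
  have hxt : x ∈ t := mem_of_mem_nhdsWithin hx ht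
  calc dist (f y) (F i y) ≤ dist (f y) (f x) + dist (f x) (F i x) + dist (F i x) (F i y) :=
        dist_triangle4 _ _ _ _
    _ < ε / 3 + ε / 3 + K * δ := by
        refine add_lt_add_of_lt_of_le (add_lt_add hyf (dist_comm (F i x) (f x) ▸ hix)) ?_
        exact (hiK.dist_le_mul x hxt y hyt).trans (by gcongr; exact (mem_ball'.1 hyx).le)
    _ ≤ ε := by linarith

section FiniteDimensional

variable [FiniteDimensional ℝ X] {ι : Type*} {l : Filter ι} {F : ι → X → ℝ} {C : Set X} {x₀ : X}

lemma ConvexOn.exists_ball_eventually_le (hF : ∀ i, ConvexOn ℝ C (F i)) (hC : C ∈ 𝓝 x₀)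
    (hb : ∀ x ∈ C, IsBoundedUnder (· ≤ ·) l fun i ↦ F i x) :
    ∃ r > 0, ball x₀ r ⊆ C ∧ ∃ M, ∀ᶠ i in l, ∀ y ∈ ball x₀ r, F i y ≤ M := by
  obtain ⟨b, hx₀b, hbC⟩ := exists_mem_interior_convexHull_affineBasis hC
  obtain ⟨r, hr, hrb⟩ := Metric.mem_nhds_iff.1 (isOpen_interior.mem_nhds hx₀b)
  have hball : ball x₀ r ⊆ convexHull ℝ (range b) := hrb.trans interior_subset
  choose M hM using fun j ↦ hb (b j) (hbC (subset_convexHull ℝ _ (mem_range_self j)))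
  refine ⟨r, hr, hball.trans hbC, ⨆ j, M j, ?_⟩
  filter_upwards [eventually_all.2 hM] with i hi y hy
  obtain ⟨_, ⟨j, rfl⟩, hyj⟩ :=
    (hF i).exists_ge_of_mem_convexHull ((subset_convexHull ℝ _).trans hbC) (hball hy)
  exact hyj.trans ((hi j).trans (le_ciSup (finite_range M).bddAbove j))

lemma ConvexOn.exists_ball_eventually_abs_le (hF : ∀ i, ConvexOn ℝ C (F i)) (hC : C ∈ 𝓝 x₀)
    (hb : ∀ x ∈ C, IsBoundedUnder (· ≤ ·) l fun i ↦ F i x)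
    (hb₀ : IsBoundedUnder (· ≥ ·) l fun i ↦ F i x₀) :
    ∃ r > 0, ball x₀ r ⊆ C ∧ ∃ M, ∀ᶠ i in l, ∀ y ∈ ball x₀ r, |F i y| ≤ M := by
  obtain ⟨r, hr, hrC, M, hM⟩ := ConvexOn.exists_ball_eventually_le hF hC hb
  obtain ⟨m, hm⟩ := hb₀
  refine ⟨r, hr, hrC, max M (M - 2 * m), ?_⟩
  filter_upwards [hM, eventually_map.1 hm] with i hiM him y hy
  have hy' : Equiv.pointReflection x₀ y ∈ ball x₀ r := by
    rwa [mem_ball, dist_pointReflection_left, dist_comm]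
  have hrefl := (hF i).two_mul_le_add_pointReflection (hrC hy) (hrC hy')
  have hy'M := hiM _ hy'
  rw [abs_le]
  constructor <;> linarith [hiM y hy, le_max_left M (M - 2 * m), le_max_right M (M - 2 * m)]

lemma ConvexOn.exists_ball_eventually_lipschitzOnWith (hF : ∀ i, ConvexOn ℝ C (F i))
    (hC : C ∈ 𝓝 x₀) (hb : ∀ x ∈ C, IsBoundedUnder (· ≤ ·) l fun i ↦ F i x)
    (hb₀ : IsBoundedUnder (· ≥ ·) l fun i ↦ F i x₀) :
    ∃ r > 0, ∃ K, ∀ᶠ i in l, LipschitzOnWith K (F i) (ball x₀ r) := by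
  obtain ⟨r, hr, hrC, M, hM⟩ := ConvexOn.exists_ball_eventually_abs_le hF hC hb hb₀
  refine ⟨r - r / 2, by linarith, (2 * M / (r / 2)).toNNReal, hM.mono fun i hi ↦ ?_⟩
  exact ((hF i).subset hrC (convex_ball x₀ r)).lipschitzOnWith_of_abs_le (half_pos hr) hi

theorem ConvexOn.tendstoLocallyUniformlyOn_of_tendsto [l.NeBot] (hC : IsOpen C)
    {f : X → ℝ} (hF : ∀ i, ConvexOn ℝ C (F i))
    (hlim : ∀ x ∈ C, Tendsto (fun i ↦ F i x) l (𝓝 (f x))) :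
    TendstoLocallyUniformlyOn F f l C := by
  obtain ⟨i₀⟩ := l.nonempty_of_neBot
  have hf : ContinuousOn f C := ((hF i₀).1.convexOn_of_tendsto hF hlim).continuousOn hC
  refine tendstoLocallyUniformlyOn_of_lipschitzOnWith hf hlim fun x hx ↦ ?_
  obtain ⟨r, hr, K, hK⟩ := ConvexOn.exists_ball_eventually_lipschitzOnWith hF (hC.mem_nhds hx)
    (fun y hy ↦ (hlim y hy).isBoundedUnder_le) (hlim x hx).isBoundedUnder_ge
  exact ⟨K, ball x r, mem_nhdsWithin_of_mem_nhds (ball_mem_nhds x hr), hK⟩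

end FiniteDimensional

/-- `Θ` need not be convex: the chord inequality is only imposed where the intermediate point
lies in `Θ`. -/
def ChordConvexOn (Θ : Set X) (g : X → ℝ) : Prop :=
  ∀ x ∈ Θ, ∀ y ∈ Θ, ∀ t ∈ Icc (0 : ℝ) 1, t • x + (1 - t) • y ∈ Θ →
    g (t • x + (1 - t) • y) ≤ t * g x + (1 - t) * g y

namespace ChordConvexOn

variable {Θ : Set X} {g : X → ℝ}

lemma convexOn (hg : ChordConvexOn Θ g) {E : Set X} (hE : Convex ℝ E) (hEΘ : E ⊆ Θ) :
    ConvexOn ℝ E g := by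
  refine ⟨hE, fun x hx y hy a b ha hb hab ↦ ?_⟩
  obtain rfl : b = 1 - a := by linarith
  exact hg x (hEΘ hx) y (hEΘ hy) a ⟨ha, by linarith⟩ (hEΘ (hE hx hy ha hb hab))

lemma le_of_forall_sphere_le (hg : ChordConvexOn Θ g) {x₀ θ : X} {r β : ℝ} (hr : 0 < r)
    (hS : sphere x₀ r ⊆ Θ) (hx₀ : x₀ ∈ Θ) (hθ : θ ∈ Θ) (hrθ : r ≤ dist θ x₀)
    (h₀ : g x₀ ≤ β) (hβ : ∀ s ∈ sphere x₀ r, β ≤ g s) : β ≤ g θ := by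
  have hd : 0 < dist θ x₀ := hr.trans_le hrθ
  set t := r / dist θ x₀
  have ht : 0 < t := div_pos hr hd
  have ht1 : t ≤ 1 := (div_le_one hd).2 hrθ
  have hs : t • θ + (1 - t) • x₀ ∈ sphere x₀ r := by
    rw [mem_sphere, dist_eq_norm, show t • θ + (1 - t) • x₀ - x₀ = t • (θ - x₀) by module,
      norm_smul, Real.norm_of_nonneg ht.le, ← dist_eq_norm, div_mul_cancel₀ r hd.ne']
  have hchord := hg θ hθ x₀ hx₀ t ⟨ht.le, ht1⟩ (hS hs)
  have := hβ _ hs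
  nlinarith

end ChordConvexOn

theorem convex_strict_min_gives_liminf_separation
    {D : ℕ} (Θ E : Set (EuclideanSpace ℝ (Fin D))) (hEΘ : E ⊆ Θ)
    (hEconv : Convex ℝ E) (hEopen : IsOpen E)
    (θ0 : EuclideanSpace ℝ (Fin D)) (hθ0 : θ0 ∈ E)
    (fn : ℕ → EuclideanSpace ℝ (Fin D) → ℝ) (f : EuclideanSpace ℝ (Fin D) → ℝ)
    (hconvex : ∀ (n : ℕ), ∀ x ∈ Θ, ∀ y ∈ Θ, ∀ t ∈ Set.Icc (0:ℝ) 1,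
      t • x + (1 - t) • y ∈ Θ →
      fn n (t • x + (1 - t) • y) ≤ t * fn n x + (1 - t) * fn n y)
    (hlim : ∀ θ ∈ E, Tendsto (fun n => fn n θ) atTop (𝓝 (f θ)))
    (hmin : ∀ θ ∈ E, θ ≠ θ0 → f θ0 < f θ) :
    ∀ ε > (0:ℝ), ∃ β, f θ0 < β ∧
      ∀ᶠ n in atTop, ∀ θ ∈ Θ \ Metric.ball θ0 ε, β ≤ fn n θ := by
  intro ε hε
  have hconvexE (n : ℕ) : ConvexOn ℝ E (fn n) :=
    ChordConvexOn.convexOn (hconvex n) hEconv hEΘ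
  obtain ⟨ρ, hρ, hρE⟩ := nhds_basis_closedBall.mem_iff.1 (hEopen.mem_nhds hθ0)
  set r := min ρ (ε / 2)
  have hr : 0 < r := lt_min hρ (half_pos hε)
  have hSE : sphere θ0 r ⊆ E :=
    sphere_subset_closedBall.trans ((closedBall_subset_closedBall (min_le_left _ _)).trans hρE)
  have hfE : ContinuousOn f E := (hEconv.convexOn_of_tendsto hconvexE hlim).continuousOn hEopen
  obtain ⟨a, ha, haS⟩ := (isCompact_sphere θ0 r).exists_forall_le' (hfE.mono hSE)
    fun s hs ↦ hmin s (hSE hs) (ne_of_mem_sphere hs hr.ne')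
  have hunif : TendstoUniformlyOn fn f atTop (sphere θ0 r) :=
    (tendstoLocallyUniformlyOn_iff_tendstoUniformlyOn_of_compact (isCompact_sphere θ0 r)).1
      ((ConvexOn.tendstoLocallyUniformlyOn_of_tendsto hEopen hconvexE hlim).mono hSE)
  refine ⟨(f θ0 + a) / 2, by linarith, ?_⟩
  filter_upwards [Metric.tendstoUniformlyOn_iff.1 hunif _ (half_pos (sub_pos.2 ha)),
    (hlim θ0 hθ0).eventually (gt_mem_nhds (by linarith : f θ0 < (f θ0 + a) / 2))]
    with n hnS hn₀ θ ⟨hθΘ, hθε⟩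
  refine ChordConvexOn.le_of_forall_sphere_le (hconvex n) hr (hSE.trans hEΘ) (hEΘ hθ0) hθΘ
    ((min_le_right _ _).trans ((half_le_self hε.le).trans (not_lt.1 hθε))) hn₀.le fun s hs ↦ ?_
  have := (abs_lt.1 (Real.dist_eq _ _ ▸ hnS s hs)).2
  linarith [haS s hs]
end

section
/- Let $E \subseteq \mathbb{R}^D$ be open and convex and $\theta_0 \in E$. Let $f_n : E \to \mathbb{R}$ have continuous third derivatives. Suppose: (1) there exist $\theta_n \in E$ with $\theta_n \to \theta_0$ and $f_n'(\theta_n) = 0$ for all sufficiently large $n$; (2) $f_n''(\theta_0) \to H_0$ for some positive definite $H_0$; and (3) the third-derivative tensors $(f_n''')$ are uniformly bounded on $E$. Then, with $H_n = f_n''(\theta_n)$, there exist $\epsilon_0, c_0 > 0$ such that for all sufficiently large $n$: $H_n \to H_0$, and for all $x$ with $|x| < \epsilon_0$, the remainder $r_n(x) := f_n(\theta_n + x) - f_n(\theta_n) - \frac{1}{2} x^\top H_n x$ satisfies $|r_n(x)| \le c_0 |x|^3$. -/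
open Filter
open scoped Topology NNReal

/-!
A uniform bound `C` on the third derivatives makes all Hessians `fₙ''` `C`-Lipschitz on a ball
around `θ₀` inside `E`. Hence `‖fₙ''(θₙ) - H₀‖ ≤ C ‖θₙ - θ₀‖ + ‖fₙ''(θ₀) - H₀‖ → 0`, and two
applications of the mean value inequality (to `fₙ'` minus its linearisation at `θₙ`, then to `fₙ`
minus its quadratic Taylor polynomial at `θₙ`) bound the Taylor remainder by `C ‖x‖³`,
uniformly in `n`.
-/

theorem tendsto_apply_of_lipschitzOnWith {ι X Y : Type*} [PseudoMetricSpace X]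
    [PseudoMetricSpace Y] {l : Filter ι} {g : ι → X → Y} {K : ℝ≥0} {U : Set X} {x : ι → X}
    {x₀ : X} {y : Y} (hU : U ∈ 𝓝 x₀) (hg : ∀ i, LipschitzOnWith K (g i) U)
    (hx : Tendsto x l (𝓝 x₀)) (hgx₀ : Tendsto (fun i => g i x₀) l (𝓝 y)) :
    Tendsto (fun i => g i (x i)) l (𝓝 y) := by
  have hbound : ∀ᶠ i in l, dist (g i (x i)) y ≤ K * dist (x i) x₀ + dist (g i x₀) y := by
    filter_upwards [hx.eventually_mem hU] with i hi
    exact (dist_triangle _ _ _).trans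
      (add_le_add_left ((hg i).dist_le_mul (x i) hi x₀ (mem_of_mem_nhds hU)) _)
  rw [tendsto_iff_dist_tendsto_zero] at hx hgx₀ ⊢
  refine squeeze_zero' (.of_forall fun i => dist_nonneg) hbound ?_
  simpa using (hx.const_mul (K : ℝ)).add hgx₀

section

variable {E F : Type*} [NormedAddCommGroup E] [NormedSpace ℝ E] [NormedAddCommGroup F]
  [NormedSpace ℝ F]

theorem lipschitzOnWith_fderiv_fderiv_of_norm_iteratedFDeriv_le {f : E → F} {s : Set E}
    {K : ℝ≥0} (hs_open : IsOpen s) (hs : Convex ℝ s) (hf : ContDiffOn ℝ 3 f s)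
    (hK : ∀ x ∈ s, ‖iteratedFDeriv ℝ 3 f x‖ ≤ K) :
    LipschitzOnWith K (fderiv ℝ (fderiv ℝ f)) s := by
  refine hs.lipschitzOnWith_of_nnnorm_fderiv_le (𝕜 := ℝ) (fun x hx => ?_) (fun x hx => ?_)
  · have hfx := hf.contDiffAt (hs_open.mem_nhds hx)
    exact ((hfx.fderiv_right (m := 2) le_rfl).fderiv_right (m := 1) le_rfl).differentiableAt
      one_ne_zero
  · rw [← NNReal.coe_le_coe, coe_nnnorm, ← norm_iteratedFDeriv_one, norm_iteratedFDeriv_fderiv,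
      norm_iteratedFDeriv_fderiv]
    exact hK x hx

theorem norm_sub_sub_fderiv_le_of_lipschitzOnWith {g : E → F} {s : Set E} {K : ℝ≥0}
    (hs : Convex ℝ s) (hg : ∀ x ∈ s, DifferentiableAt ℝ g x)
    (hK : LipschitzOnWith K (fderiv ℝ g) s) {a b : E} (ha : a ∈ s) (hb : b ∈ s) :
    ‖g b - g a - fderiv ℝ g a (b - a)‖ ≤ K * ‖b - a‖ ^ 2 := by
  have hab : segment ℝ a b ⊆ s := hs.segment_subset ha hb
  have hbound : ∀ x ∈ segment ℝ a b, ‖fderiv ℝ g x - fderiv ℝ g a‖ ≤ K * ‖b - a‖ :=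
    fun x hx => (hK.norm_sub_le (hab hx) ha).trans
      (mul_le_mul_of_nonneg_left (norm_sub_le_of_mem_segment hx) K.coe_nonneg)
  have := (convex_segment a b).norm_image_sub_le_of_norm_fderiv_le' (fun x hx => hg x (hab hx))
    hbound (left_mem_segment ℝ a b) (right_mem_segment ℝ a b)
  rwa [mul_assoc, ← sq] at this

theorem ContinuousLinearMap.hasFDerivAt_half_apply_sub_apply_sub {B : E →L[ℝ] E →L[ℝ] ℝ}
    (hB : ∀ u v, B u v = B v u) (a x : E) :
    HasFDerivAt (fun y => 1 / 2 * B (y - a) (y - a)) (B (x - a)) x := by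
  have hsub : HasFDerivAt (fun y : E => y - a) (ContinuousLinearMap.id ℝ E) x :=
    (hasFDerivAt_id x).sub_const a
  refine ((B.hasFDerivAt_of_bilinear hsub hsub).const_mul (1 / 2 : ℝ)).congr_fderiv ?_
  ext v
  simp [precompR, precompL, hB v, ← two_mul]

theorem abs_sub_sub_sub_half_le_of_lipschitzOnWith {f : E → ℝ} {s : Set E} {K : ℝ≥0}
    (hs : Convex ℝ s) (hf : ∀ x ∈ s, ContDiffAt ℝ 2 f x)
    (hK : LipschitzOnWith K (fderiv ℝ (fderiv ℝ f)) s) {a b : E} (ha : a ∈ s) (hb : b ∈ s) :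
    |f b - f a - fderiv ℝ f a (b - a) - 1 / 2 * fderiv ℝ (fderiv ℝ f) a (b - a) (b - a)|
      ≤ K * ‖b - a‖ ^ 3 := by
  set L := fderiv ℝ f a
  set H := fderiv ℝ (fderiv ℝ f) a
  have hH : ∀ u v, H u v = H v u := ((hf a ha).isSymmSndFDerivAt (by simp)).eq
  set r : E → ℝ := fun y => f y - L (y - a) - 1 / 2 * H (y - a) (y - a)
  have hr : ∀ y ∈ s, HasFDerivAt r (fderiv ℝ f y - L - H (y - a)) y := fun y hy =>
    (((hf y hy).differentiableAt two_ne_zero).hasFDerivAt.sub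
      ((L.hasFDerivAt.comp y ((hasFDerivAt_id y).sub_const a)).congr_fderiv (L.comp_id))).sub
      (H.hasFDerivAt_half_apply_sub_apply_sub hH a y)
  have hab : segment ℝ a b ⊆ s := hs.segment_subset ha hb
  have hbound : ∀ y ∈ segment ℝ a b, ‖fderiv ℝ f y - L - H (y - a)‖ ≤ K * ‖b - a‖ ^ 2 := by
    intro y hy
    calc ‖fderiv ℝ f y - L - H (y - a)‖ ≤ K * ‖y - a‖ ^ 2 :=
          norm_sub_sub_fderiv_le_of_lipschitzOnWith hs
            (fun x hx => ((hf x hx).fderiv_right (m := 1) le_rfl).differentiableAt one_ne_zero)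
            hK ha (hab hy)
      _ ≤ K * ‖b - a‖ ^ 2 := by gcongr; exact norm_sub_le_of_mem_segment hy
  have hmvt := (convex_segment a b).norm_image_sub_le_of_norm_hasFDerivWithin_le
    (fun y hy => (hr y (hab hy)).hasFDerivWithinAt) hbound
    (left_mem_segment ℝ a b) (right_mem_segment ℝ a b)
  have hra : r a = f a := by simp [r]
  have hrb : r b - f a = f b - f a - L (b - a) - 1 / 2 * H (b - a) (b - a) := by
    simp only [r]; ring
  calc _ = ‖r b - r a‖ := by rw [hra, Real.norm_eq_abs, hrb]
    _ ≤ K * ‖b - a‖ ^ 2 * ‖b - a‖ := hmvt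
    _ = K * ‖b - a‖ ^ 3 := by ring

end

theorem quadratic_representation_sufficient_conditions_general
    {D : ℕ} (E : Set (EuclideanSpace ℝ (Fin D)))
    (hEopen : IsOpen E)
    (θ0 : EuclideanSpace ℝ (Fin D)) (hθ0 : θ0 ∈ E)
    (fn : ℕ → EuclideanSpace ℝ (Fin D) → ℝ)
    (hsmooth : ∀ n, ContDiffOn ℝ 3 (fn n) E)
    (θn : ℕ → EuclideanSpace ℝ (Fin D))
    (hθn : Tendsto θn atTop (𝓝 θ0))
    (hcrit : ∀ᶠ n in atTop, fderiv ℝ (fn n) (θn n) = 0)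
    (H0 : EuclideanSpace ℝ (Fin D) →L[ℝ] EuclideanSpace ℝ (Fin D) →L[ℝ] ℝ)
    (hH0lim : Tendsto (fun n => fderiv ℝ (fderiv ℝ (fn n)) θ0) atTop (𝓝 H0))
    (hthird : ∃ C, ∀ (n : ℕ), ∀ θ ∈ E, ‖iteratedFDeriv ℝ 3 (fn n) θ‖ ≤ C) :
    Tendsto (fun n => fderiv ℝ (fderiv ℝ (fn n)) (θn n)) atTop (𝓝 H0) ∧
    ∃ ε0 > (0:ℝ), ∃ c0 > (0:ℝ), ∀ᶠ n in atTop,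
      ∀ x : EuclideanSpace ℝ (Fin D), ‖x‖ < ε0 →
        |fn n (θn n + x) - fn n (θn n)
          - (1/2) * fderiv ℝ (fderiv ℝ (fn n)) (θn n) x x| ≤ c0 * ‖x‖ ^ 3 := by
  obtain ⟨C, hC⟩ := hthird
  obtain ⟨ε, hε, hball⟩ := Metric.isOpen_iff.mp hEopen θ0 hθ0
  have hlip : ∀ n, LipschitzOnWith C.toNNReal (fderiv ℝ (fderiv ℝ (fn n))) (Metric.ball θ0 ε) :=
    fun n => lipschitzOnWith_fderiv_fderiv_of_norm_iteratedFDeriv_le Metric.isOpen_ball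
      (convex_ball θ0 ε) ((hsmooth n).mono hball)
      fun x hx => (hC n x (hball hx)).trans C.le_coe_toNNReal
  refine ⟨tendsto_apply_of_lipschitzOnWith (Metric.ball_mem_nhds θ0 hε) hlip hθn hH0lim,
    ε / 2, half_pos hε, C.toNNReal + 1, by positivity, ?_⟩
  filter_upwards [hcrit, hθn.eventually (Metric.ball_mem_nhds θ0 (half_pos hε))]
    with n hcritn hθn_near x hx
  have hθx_mem : θn n + x ∈ Metric.ball θ0 ε := by
    rw [Metric.mem_ball]
    calc dist (θn n + x) θ0 ≤ dist (θn n + x) (θn n) + dist (θn n) θ0 := dist_triangle _ _ _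
      _ < ε := by rw [dist_self_add_left]; linarith
  have htaylor := abs_sub_sub_sub_half_le_of_lipschitzOnWith (convex_ball θ0 ε)
    (fun y hy => ((hsmooth n).contDiffAt (hEopen.mem_nhds (hball hy))).of_le (by norm_num))
    (hlip n) (Metric.ball_subset_ball (half_le_self hε.le) hθn_near) hθx_mem
  simp only [hcritn, add_sub_cancel_left, zero_apply, sub_zero] at htaylor
  calc _ ≤ C.toNNReal * ‖x‖ ^ 3 := htaylor
    _ ≤ (C.toNNReal + 1) * ‖x‖ ^ 3 := by gcongr; linarith

theorem quadratic_representation_sufficient_conditions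
    {D : ℕ} (E : Set (EuclideanSpace ℝ (Fin D)))
    (hEopen : IsOpen E) (hEconv : Convex ℝ E)
    (θ0 : EuclideanSpace ℝ (Fin D)) (hθ0 : θ0 ∈ E)
    (fn : ℕ → EuclideanSpace ℝ (Fin D) → ℝ)
    (hsmooth : ∀ n, ContDiffOn ℝ 3 (fn n) E)
    (θn : ℕ → EuclideanSpace ℝ (Fin D)) (hθnE : ∀ n, θn n ∈ E)
    (hθn : Tendsto θn atTop (𝓝 θ0))
    (hcrit : ∀ᶠ n in atTop, fderiv ℝ (fn n) (θn n) = 0)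
    (H0 : EuclideanSpace ℝ (Fin D) →L[ℝ] EuclideanSpace ℝ (Fin D) →L[ℝ] ℝ)
    (hH0lim : Tendsto (fun n => fderiv ℝ (fderiv ℝ (fn n)) θ0) atTop (𝓝 H0))
    (hH0posdef : ∀ v : EuclideanSpace ℝ (Fin D), v ≠ 0 → 0 < H0 v v)
    (hthird : ∃ C, ∀ (n : ℕ), ∀ θ ∈ E, ‖iteratedFDeriv ℝ 3 (fn n) θ‖ ≤ C) :
    Tendsto (fun n => fderiv ℝ (fderiv ℝ (fn n)) (θn n)) atTop (𝓝 H0) ∧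
    ∃ ε0 > (0:ℝ), ∃ c0 > (0:ℝ), ∀ᶠ n in atTop,
      ∀ x : EuclideanSpace ℝ (Fin D), ‖x‖ < ε0 →
        |fn n (θn n + x) - fn n (θn n)
          - (1/2) * fderiv ℝ (fderiv ℝ (fn n)) (θn n) x x| ≤ c0 * ‖x‖ ^ 3 :=
  quadratic_representation_sufficient_conditions_general E hEopen θ0 hθ0 fn hsmooth θn hθn hcrit H0
    hH0lim hthird
end

section
/- Let $E \subseteq \mathbb{R}^D$ be open, convex, and bounded. For $n \in \mathbb{N}$, let $f_n : E \to \mathbb{R}$ have continuous third derivatives, and suppose the third-derivative tensors $(f_n''')$ are uniformly bounded on $E$. If $(f_n)$ is pointwise bounded, then $(f_n)$, $(f_n')$, and $(f_n'')$ are all equi-Lipschitz and uniformly bounded on $E$. If moreover $f_n \to f$ pointwise for some $f : E \to \mathbb{R}$, then $f'$ and $f''$ exist on $E$, and $f_n \to f$, $f_n' \to f'$, and $f_n'' \to f''$ all uniformly on $E$. -/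
/-
A bound `C` on the third derivatives makes every `f n''` `C`-Lipschitz, so the second-order
Taylor remainder at a point `a` is at most `C ‖v‖³`. Since the second-order term cancels in the
symmetric difference `f (a + v) - f (a - v)` and the affine part in the second difference
`f (a + u + v) - f (a + u) - f (a + v) + f a`, pointwise boundedness of `f n` makes the families
`f n' a` and `f n'' a` pointwise bounded on a ball, hence bounded in norm by Banach–Steinhaus.
Integrating back along segments of the bounded convex set gives the uniform bounds, and with them
the equi-Lipschitz estimates.

For convergence: equi-Lipschitz functions converging pointwise on a totally bounded set converge
uniformly. If `h` is uniformly small and `h'` is `K`-Lipschitz, then `h'` is uniformly small: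
at a point `y` with `closedBall y ρ ⊆ E` one has `‖h' y‖ ≤ 2 sup ‖h‖ / ρ + K ρ`, and by convexity
every point of `E` is close to such a `y`. Applied to `f m - f n`, this makes `f n'` and then
`f n''` uniformly Cauchy, and the theorem on uniform limits of derivatives identifies the limits as
`f'` and `f''`.
-/

open Filter Set Metric
open scoped Topology

-- Instance search does not find the norm on `X →L[ℝ] X →L[ℝ] X →L[ℝ] F` without these shortcuts.
noncomputable local instance {X F : Type*} [NormedAddCommGroup X] [NormedSpace ℝ X]
    [NormedAddCommGroup F] [NormedSpace ℝ F] : NormedAddCommGroup (X →L[ℝ] X →L[ℝ] F) :=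
  inferInstance

noncomputable local instance {X F : Type*} [NormedAddCommGroup X] [NormedSpace ℝ X]
    [NormedAddCommGroup F] [NormedSpace ℝ F] : NormedSpace ℝ (X →L[ℝ] X →L[ℝ] F) :=
  inferInstance

theorem norm_sub_sub_add_le {E : Type*} [SeminormedAddCommGroup E] (a b c d : E) :
    ‖a - b - c + d‖ ≤ ‖a‖ + ‖b‖ + ‖c‖ + ‖d‖ := by
  linarith [norm_sub_le a b, norm_sub_le (a - b) c, norm_add_le (a - b - c) d]

theorem norm_sub_sub_le {E : Type*} [SeminormedAddCommGroup E] (a b c : E) :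
    ‖a - b - c‖ ≤ ‖a‖ + ‖b‖ + ‖c‖ := by
  linarith [norm_sub_le a b, norm_sub_le (a - b) c]

section

variable {X F : Type*} [NormedAddCommGroup X] [NormedSpace ℝ X]
  [NormedAddCommGroup F] [NormedSpace ℝ F]

theorem Convex.norm_image_sub_sub_fderiv_le {s : Set X} (hs : Convex ℝ s) {h : X → F}
    (hd : ∀ x ∈ s, DifferentiableAt ℝ h x) {a b : X} (ha : a ∈ s) (hb : b ∈ s)
    {K : ℝ} (hK : 0 ≤ K) (hlip : ∀ x ∈ s, ‖fderiv ℝ h x - fderiv ℝ h a‖ ≤ K * ‖x - a‖) :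
    ‖h b - h a - fderiv ℝ h a (b - a)‖ ≤ K * ‖b - a‖ ^ 2 := by
  have hseg := hs.segment_subset ha hb
  have := (convex_segment a b).norm_image_sub_le_of_norm_fderiv_le' (fun x hx => hd x (hseg hx))
    (fun x hx => (hlip x (hseg hx)).trans
      (mul_le_mul_of_nonneg_left (norm_sub_le_of_mem_segment hx) hK))
    (left_mem_segment ℝ a b) (right_mem_segment ℝ a b)
  linarith

noncomputable def taylorRemainder₂ (h : X → F) (a v : X) : F :=
  h (a + v) - h a - fderiv ℝ h a v - (2 : ℝ)⁻¹ • fderiv ℝ (fderiv ℝ h) a v v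

theorem IsSymmSndFDerivAt.hasFDerivAt_half_fderiv_fderiv_sub {h : X → F} {a : X}
    (hsymm : IsSymmSndFDerivAt ℝ h a) (z : X) :
    HasFDerivAt (fun z => (2 : ℝ)⁻¹ • fderiv ℝ (fderiv ℝ h) a (z - a) (z - a))
      (fderiv ℝ (fderiv ℝ h) a (z - a)) z := by
  have hsub : HasFDerivAt (fun z : X => z - a) (ContinuousLinearMap.id ℝ X) z :=
    (hasFDerivAt_id z).sub_const a
  convert ((fderiv ℝ (fderiv ℝ h) a).hasFDerivAt_of_bilinear hsub hsub).const_smul (2 : ℝ)⁻¹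
    using 1
  · rfl
  · ext w
    simp only [smul_apply, add_apply,
      ContinuousLinearMap.precompR_apply, ContinuousLinearMap.precompL_apply,
      ContinuousLinearMap.compL_apply, ContinuousLinearMap.comp_apply, ContinuousLinearMap.id_apply]
    rw [hsymm w (z - a)]
    module

theorem Convex.norm_taylorRemainder₂_le {s : Set X} (hs : Convex ℝ s) {h : X → F}
    (hd : ∀ x ∈ s, DifferentiableAt ℝ h x) (hd' : ∀ x ∈ s, DifferentiableAt ℝ (fderiv ℝ h) x)
    {a v : X} (ha : a ∈ s) (hv : a + v ∈ s) (hsymm : IsSymmSndFDerivAt ℝ h a)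
    {K : ℝ} (hK : 0 ≤ K)
    (hlip : ∀ x ∈ s, ‖fderiv ℝ (fderiv ℝ h) x - fderiv ℝ (fderiv ℝ h) a‖ ≤ K * ‖x - a‖) :
    ‖taylorRemainder₂ h a v‖ ≤ K * ‖v‖ ^ 3 := by
  set g : X → F := fun z =>
    h z - fderiv ℝ h a (z - a) - (2 : ℝ)⁻¹ • fderiv ℝ (fderiv ℝ h) a (z - a) (z - a)
  have hg : ∀ z ∈ s, HasFDerivAt g
      (fderiv ℝ h z - fderiv ℝ h a - fderiv ℝ (fderiv ℝ h) a (z - a)) z := fun z hz =>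
    ((hd z hz).hasFDerivAt.sub ((fderiv ℝ h a).hasFDerivAt.comp z
      ((hasFDerivAt_id z).sub_const a))).sub (hsymm.hasFDerivAt_half_fderiv_fderiv_sub z)
  have hseg := hs.segment_subset ha hv
  have hbound : ∀ z ∈ segment ℝ a (a + v),
      ‖fderiv ℝ h z - fderiv ℝ h a - fderiv ℝ (fderiv ℝ h) a (z - a)‖ ≤ K * ‖v‖ ^ 2 :=
    fun z hz => calc
      _ ≤ K * ‖z - a‖ ^ 2 := hs.norm_image_sub_sub_fderiv_le hd' ha (hseg hz) hK hlip
      _ ≤ K * ‖v‖ ^ 2 := by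
        gcongr
        simpa using norm_sub_le_of_mem_segment hz
  have key := (convex_segment a (a + v)).norm_image_sub_le_of_norm_hasFDerivWithin_le
    (fun z hz => (hg z (hseg hz)).hasFDerivWithinAt) hbound
    (left_mem_segment ℝ a (a + v)) (right_mem_segment ℝ a (a + v))
  have hT : g (a + v) - g a = taylorRemainder₂ h a v := by
    simp only [g, taylorRemainder₂, add_sub_cancel_left, sub_self, map_zero,
      smul_zero, sub_zero]
    abel
  rw [hT, add_sub_cancel_left] at key
  linarith

theorem two_smul_fderiv_apply_eq (h : X → F) (a v : X) :
    (2 : ℝ) • fderiv ℝ h a v =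
      h (a + v) - h (a + -v) - taylorRemainder₂ h a v + taylorRemainder₂ h a (-v) := by
  simp only [taylorRemainder₂, map_neg, neg_apply, neg_neg]
  module

theorem IsSymmSndFDerivAt.fderiv_fderiv_apply_eq {h : X → F} {a : X}
    (hsymm : IsSymmSndFDerivAt ℝ h a) (u v : X) :
    fderiv ℝ (fderiv ℝ h) a u v = (h (a + (u + v)) - h (a + u) - h (a + v) + h a)
      - (taylorRemainder₂ h a (u + v) - taylorRemainder₂ h a u - taylorRemainder₂ h a v) := by
  simp only [taylorRemainder₂, map_add, add_apply, hsymm v u]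
  module

theorem banach_steinhaus_of_forall_mem_ball [CompleteSpace X] {ι : Type*}
    {g : ι → X →L[ℝ] F} {r : ℝ} (hr : 0 < r)
    (hg : ∀ v ∈ ball (0 : X) r, ∃ C, ∀ i, ‖g i v‖ ≤ C) : ∃ C, ∀ i, ‖g i‖ ≤ C := by
  refine banach_steinhaus fun v => ?_
  set t := r / (‖v‖ + r)
  have ht : 0 < t := by positivity
  obtain ⟨C, hC⟩ := hg (t • v) (by
    rw [mem_ball_zero_iff, norm_smul, Real.norm_of_nonneg ht.le, div_mul_eq_mul_div,
      div_lt_iff₀ (by positivity)]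
    nlinarith [norm_nonneg v])
  refine ⟨C / t, fun i => ?_⟩
  rw [le_div_iff₀ ht, mul_comm, ← Real.norm_of_nonneg ht.le, ← norm_smul, ← map_smul]
  exact hC i

theorem exists_norm_fderiv_le_of_forall_norm_le [CompleteSpace X] {ι : Type*} {f : ι → X → F}
    {a : X} {r K : ℝ} (hr : 0 < r) (hK : 0 ≤ K)
    (hd : ∀ i, ∀ x ∈ ball a r, DifferentiableAt ℝ (f i) x)
    (hd' : ∀ i, ∀ x ∈ ball a r, DifferentiableAt ℝ (fderiv ℝ (f i)) x)
    (hsymm : ∀ i, IsSymmSndFDerivAt ℝ (f i) a)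
    (hlip : ∀ i, ∀ x ∈ ball a r,
      ‖fderiv ℝ (fderiv ℝ (f i)) x - fderiv ℝ (fderiv ℝ (f i)) a‖ ≤ K * ‖x - a‖)
    (hpt : ∀ x ∈ ball a r, ∃ M, ∀ i, ‖f i x‖ ≤ M) :
    (∃ M, ∀ i, ‖fderiv ℝ (f i) a‖ ≤ M) ∧ ∃ M, ∀ i, ‖fderiv ℝ (fderiv ℝ (f i)) a‖ ≤ M := by
  have hT : ∀ i v, ‖v‖ < r → ‖taylorRemainder₂ (f i) a v‖ ≤ K * ‖v‖ ^ 3 := fun i v hv =>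
    (convex_ball a r).norm_taylorRemainder₂_le (hd i) (hd' i) (mem_ball_self hr)
      (by simpa using hv) (hsymm i) hK (hlip i)
  have hbdd : ∀ v, ‖v‖ < r → ∃ M, ∀ i, ‖f i (a + v)‖ ≤ M := fun v hv =>
    hpt _ (by simpa using hv)
  constructor
  · refine banach_steinhaus_of_forall_mem_ball hr fun v hv => ?_
    rw [mem_ball_zero_iff] at hv
    obtain ⟨M₁, hM₁⟩ := hbdd v hv
    obtain ⟨M₂, hM₂⟩ := hbdd (-v) (by simpa using hv)
    refine ⟨M₁ + M₂ + 2 * (K * ‖v‖ ^ 3), fun i => ?_⟩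
    calc ‖fderiv ℝ (f i) a v‖ ≤ ‖(2 : ℝ) • fderiv ℝ (f i) a v‖ := by
          rw [norm_smul, Real.norm_two]; linarith [norm_nonneg (fderiv ℝ (f i) a v)]
      _ ≤ ‖f i (a + v)‖ + ‖f i (a + -v)‖ + ‖taylorRemainder₂ (f i) a v‖
          + ‖taylorRemainder₂ (f i) a (-v)‖ := by
          rw [two_smul_fderiv_apply_eq]; exact norm_sub_sub_add_le _ _ _ _
      _ ≤ M₁ + M₂ + K * ‖v‖ ^ 3 + K * ‖-v‖ ^ 3 := by
          gcongr
          exacts [hM₁ i, hM₂ i, hT i v hv, hT i (-v) (by simpa using hv)]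
      _ = M₁ + M₂ + 2 * (K * ‖v‖ ^ 3) := by rw [norm_neg]; ring
  · have hB : ∀ u ∈ ball (0 : X) (r / 2), ∀ v ∈ ball (0 : X) (r / 2),
        ∃ M, ∀ i, ‖fderiv ℝ (fderiv ℝ (f i)) a u v‖ ≤ M := by
      intro u hu v hv
      rw [mem_ball_zero_iff] at hu hv
      have huv : ‖u + v‖ < r := (norm_add_le u v).trans_lt (by linarith)
      obtain ⟨M₁, hM₁⟩ := hbdd (u + v) huv
      obtain ⟨M₂, hM₂⟩ := hbdd u (by linarith)
      obtain ⟨M₃, hM₃⟩ := hbdd v (by linarith)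
      obtain ⟨M₄, hM₄⟩ := hpt a (mem_ball_self hr)
      refine ⟨M₁ + M₂ + M₃ + M₄ + (K * ‖u + v‖ ^ 3 + K * ‖u‖ ^ 3 + K * ‖v‖ ^ 3), fun i => ?_⟩
      rw [(hsymm i).fderiv_fderiv_apply_eq]
      refine (norm_sub_le _ _).trans (add_le_add ((norm_sub_sub_add_le _ _ _ _).trans ?_) ?_)
      · gcongr
        exacts [hM₁ i, hM₂ i, hM₃ i, hM₄ i]
      · refine (norm_sub_sub_le _ _ _).trans ?_
        gcongr
        exacts [hT i _ huv, hT i u (by linarith), hT i v (by linarith)]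
    refine banach_steinhaus_of_forall_mem_ball (half_pos hr) fun u hu => ?_
    exact banach_steinhaus_of_forall_mem_ball (half_pos hr) (hB u hu)

theorem ContDiffOn.differentiableAt_fderiv_fderiv {f : X → F} {s : Set X}
    (hf : ContDiffOn ℝ 3 f s) (hs : IsOpen s) {x : X} (hx : x ∈ s) :
    DifferentiableAt ℝ f x ∧ DifferentiableAt ℝ (fderiv ℝ f) x ∧
      DifferentiableAt ℝ (fderiv ℝ (fderiv ℝ f)) x := by
  have h1 := hf.fderiv_of_isOpen hs (m := 2) (by norm_num)
  have h2 := h1.fderiv_of_isOpen hs (m := 1) (by norm_num)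
  exact ⟨(hf.differentiableOn (by norm_num)).differentiableAt (hs.mem_nhds hx),
    (h1.differentiableOn (by norm_num)).differentiableAt (hs.mem_nhds hx),
    (h2.differentiableOn (by norm_num)).differentiableAt (hs.mem_nhds hx)⟩

theorem norm_fderiv_fderiv_fderiv_eq_norm_iteratedFDeriv (f : X → F) (x : X) :
    ‖fderiv ℝ (fderiv ℝ (fderiv ℝ f)) x‖ = ‖iteratedFDeriv ℝ 3 f x‖ := by
  rw [← norm_iteratedFDeriv_zero (𝕜 := ℝ), norm_iteratedFDeriv_fderiv,
    norm_iteratedFDeriv_fderiv, norm_iteratedFDeriv_fderiv]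

theorem Convex.norm_le_add_mul_diam {s : Set X} (hs : Convex ℝ s) (hbdd : Bornology.IsBounded s)
    {h : X → F} (hd : ∀ x ∈ s, DifferentiableAt ℝ h x) {M : ℝ}
    (hM : ∀ x ∈ s, ‖fderiv ℝ h x‖ ≤ M) {a x : X} (ha : a ∈ s) (hx : x ∈ s) :
    ‖h x‖ ≤ ‖h a‖ + M * diam s := by
  have hM0 : 0 ≤ M := (norm_nonneg _).trans (hM a ha)
  calc ‖h x‖ ≤ ‖h a‖ + ‖h x - h a‖ := norm_le_norm_add_norm_sub' _ _
    _ ≤ ‖h a‖ + M * ‖x - a‖ := by gcongr; exact hs.norm_image_sub_le_of_norm_fderiv_le hd hM ha hx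
    _ ≤ ‖h a‖ + M * diam s := by
      gcongr; rw [← dist_eq_norm]; exact dist_le_diam_of_mem hbdd hx ha

theorem exists_bound_of_norm_iteratedFDeriv_three_le [CompleteSpace X] {ι : Type*} {s : Set X}
    (hs_open : IsOpen s) (hs_conv : Convex ℝ s) (hs_bdd : Bornology.IsBounded s)
    {f : ι → X → F} (hf : ∀ i, ContDiffOn ℝ 3 (f i) s) {C : ℝ}
    (hC : ∀ i, ∀ x ∈ s, ‖iteratedFDeriv ℝ 3 (f i) x‖ ≤ C)
    (hpt : ∀ x ∈ s, ∃ M, ∀ i, ‖f i x‖ ≤ M) :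
    ∃ M, ∀ i, ∀ x ∈ s, ‖f i x‖ ≤ M ∧ ‖fderiv ℝ (f i) x‖ ≤ M ∧
      ‖fderiv ℝ (fderiv ℝ (f i)) x‖ ≤ M ∧ ‖fderiv ℝ (fderiv ℝ (fderiv ℝ (f i))) x‖ ≤ M := by
  rcases s.eq_empty_or_nonempty with rfl | ⟨a, ha⟩
  · exact ⟨0, by simp⟩
  have hd := fun i x (hx : x ∈ s) => (hf i).differentiableAt_fderiv_fderiv hs_open hx
  have h₃ : ∀ i, ∀ x ∈ s, ‖fderiv ℝ (fderiv ℝ (fderiv ℝ (f i))) x‖ ≤ C := fun i x hx =>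
    (norm_fderiv_fderiv_fderiv_eq_norm_iteratedFDeriv _ _).trans_le (hC i x hx)
  obtain ⟨r, hr, hball⟩ := Metric.isOpen_iff.1 hs_open a ha
  obtain ⟨⟨M₁, hM₁⟩, ⟨M₂, hM₂⟩⟩ := exists_norm_fderiv_le_of_forall_norm_le hr (le_max_right C 0)
    (fun i x hx => (hd i x (hball hx)).1) (fun i x hx => (hd i x (hball hx)).2.1)
    (fun i => ((hf i).contDiffAt (hs_open.mem_nhds ha)).isSymmSndFDerivAt (by norm_num))
    (fun i x hx => hs_conv.norm_image_sub_le_of_norm_fderiv_le (fun y hy => (hd i y hy).2.2)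
      (fun y hy => (h₃ i y hy).trans (le_max_left C 0)) ha (hball hx))
    (fun x hx => hpt x (hball hx))
  obtain ⟨M₀, hM₀⟩ := hpt a ha
  have h₂ : ∀ i, ∀ x ∈ s, ‖fderiv ℝ (fderiv ℝ (f i)) x‖ ≤ M₂ + C * diam s := fun i x hx =>
    (hs_conv.norm_le_add_mul_diam hs_bdd (fun y hy => (hd i y hy).2.2) (h₃ i) ha hx).trans
      (by gcongr; exact hM₂ i)
  have h₁ : ∀ i, ∀ x ∈ s, ‖fderiv ℝ (f i) x‖ ≤ M₁ + (M₂ + C * diam s) * diam s := fun i x hx =>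
    (hs_conv.norm_le_add_mul_diam hs_bdd (fun y hy => (hd i y hy).2.1) (h₂ i) ha hx).trans
      (by gcongr; exact hM₁ i)
  have h₀ : ∀ i, ∀ x ∈ s, ‖f i x‖ ≤ M₀ + (M₁ + (M₂ + C * diam s) * diam s) * diam s :=
    fun i x hx =>
      (hs_conv.norm_le_add_mul_diam hs_bdd (fun y hy => (hd i y hy).1) (h₁ i) ha hx).trans
        (by gcongr; exact hM₀ i)
  refine ⟨max (max (M₀ + (M₁ + (M₂ + C * diam s) * diam s) * diam s)
    (M₁ + (M₂ + C * diam s) * diam s)) (max (M₂ + C * diam s) C), fun i x hx => ?_⟩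
  simp only [le_max_iff]
  exact ⟨.inl (.inl (h₀ i x hx)), .inl (.inr (h₁ i x hx)), .inr (.inl (h₂ i x hx)),
    .inr (.inr (h₃ i x hx))⟩

theorem exists_bound_and_lipschitz_of_norm_iteratedFDeriv_three_le [CompleteSpace X] {ι : Type*}
    {s : Set X} (hs_open : IsOpen s) (hs_conv : Convex ℝ s) (hs_bdd : Bornology.IsBounded s)
    {f : ι → X → F} (hf : ∀ i, ContDiffOn ℝ 3 (f i) s) {C : ℝ}
    (hC : ∀ i, ∀ x ∈ s, ‖iteratedFDeriv ℝ 3 (f i) x‖ ≤ C)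
    (hpt : ∀ x ∈ s, ∃ M, ∀ i, ‖f i x‖ ≤ M) :
    ∃ M, (∀ i, ∀ x ∈ s, ‖f i x‖ ≤ M ∧ ‖fderiv ℝ (f i) x‖ ≤ M ∧
        ‖fderiv ℝ (fderiv ℝ (f i)) x‖ ≤ M) ∧
      ∀ i, ∀ x ∈ s, ∀ y ∈ s, ‖f i x - f i y‖ ≤ M * ‖x - y‖ ∧
        ‖fderiv ℝ (f i) x - fderiv ℝ (f i) y‖ ≤ M * ‖x - y‖ ∧
        ‖fderiv ℝ (fderiv ℝ (f i)) x - fderiv ℝ (fderiv ℝ (f i)) y‖ ≤ M * ‖x - y‖ := by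
  obtain ⟨M, hM⟩ := exists_bound_of_norm_iteratedFDeriv_three_le hs_open hs_conv hs_bdd hf hC hpt
  have hd := fun i x (hx : x ∈ s) => (hf i).differentiableAt_fderiv_fderiv hs_open hx
  refine ⟨M, fun i x hx => ⟨(hM i x hx).1, (hM i x hx).2.1, (hM i x hx).2.2.1⟩,
    fun i x hx y hy => ⟨?_, ?_, ?_⟩⟩
  · exact hs_conv.norm_image_sub_le_of_norm_fderiv_le (fun z hz => (hd i z hz).1)
      (fun z hz => (hM i z hz).2.1) hy hx
  · exact hs_conv.norm_image_sub_le_of_norm_fderiv_le (fun z hz => (hd i z hz).2.1)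
      (fun z hz => (hM i z hz).2.2.1) hy hx
  · exact hs_conv.norm_image_sub_le_of_norm_fderiv_le (fun z hz => (hd i z hz).2.2)
      (fun z hz => (hM i z hz).2.2.2) hy hx

theorem Convex.closedBall_add_smul_sub_subset {s : Set X} (hs : Convex ℝ s) {a x : X} {r t : ℝ}
    (hball : closedBall a r ⊆ s) (hx : x ∈ s) (ht₀ : 0 < t) (ht₁ : t ≤ 1) :
    closedBall (x + t • (a - x)) (t * r) ⊆ s := by
  intro z hz
  have hmem : a + t⁻¹ • (z - (x + t • (a - x))) ∈ closedBall a r := by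
    rw [mem_closedBall, dist_eq_norm, add_sub_cancel_left, norm_smul, Real.norm_of_nonneg
      (inv_nonneg.2 ht₀.le), inv_mul_le_iff₀ ht₀, ← dist_eq_norm]
    exact hz
  convert hs hx (hball hmem) (sub_nonneg.2 ht₁) ht₀.le (by ring) using 1
  rw [smul_add, smul_smul, mul_inv_cancel₀ ht₀.ne', one_smul]
  module

theorem norm_fderiv_le_of_forall_mem_closedBall {h : X → F} {y : X} {ρ ε K : ℝ} (hρ : 0 < ρ)
    (hK : 0 ≤ K) (hd : ∀ x ∈ closedBall y ρ, DifferentiableAt ℝ h x)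
    (hε : ∀ x ∈ closedBall y ρ, ‖h x‖ ≤ ε)
    (hlip : ∀ x ∈ closedBall y ρ, ‖fderiv ℝ h x - fderiv ℝ h y‖ ≤ K * ‖x - y‖) :
    ‖fderiv ℝ h y‖ ≤ 2 * ε / ρ + K * ρ := by
  have hε₀ : 0 ≤ ε := (norm_nonneg _).trans (hε y (mem_closedBall_self hρ.le))
  refine ContinuousLinearMap.opNorm_le_bound _ (by positivity) fun v => ?_
  rcases eq_or_ne v 0 with rfl | hv
  · simp
  have hv₀ : 0 < ‖v‖ := norm_pos_iff.2 hv
  set w := (ρ / ‖v‖) • v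
  have hw : ‖w‖ = ρ := by
    rw [norm_smul, Real.norm_of_nonneg (by positivity), div_mul_cancel₀ _ hv₀.ne']
  have hyw : y + w ∈ closedBall y ρ := by simp [hw]
  have key : ρ / ‖v‖ * ‖fderiv ℝ h y v‖ ≤ 2 * ε + K * ρ ^ 2 := by
    rw [← Real.norm_of_nonneg (by positivity : 0 ≤ ρ / ‖v‖), ← norm_smul, ← map_smul]
    calc ‖fderiv ℝ h y w‖
        = ‖(h (y + w) - h y) - (h (y + w) - h y - fderiv ℝ h y (y + w - y))‖ := by
          rw [add_sub_cancel_left, sub_sub_cancel]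
      _ ≤ (ε + ε) + K * ‖y + w - y‖ ^ 2 := by
          refine (norm_sub_le _ _).trans (add_le_add ((norm_sub_le _ _).trans
            (add_le_add (hε _ hyw) (hε _ (mem_closedBall_self hρ.le)))) ?_)
          exact (convex_closedBall y ρ).norm_image_sub_sub_fderiv_le hd
            (mem_closedBall_self hρ.le) hyw hK hlip
      _ = 2 * ε + K * ρ ^ 2 := by rw [add_sub_cancel_left, hw]; ring
  rw [div_mul_eq_mul_div, div_le_iff₀ hv₀] at key
  rw [div_add' _ _ _ hρ.ne', div_mul_eq_mul_div, le_div_iff₀ hρ]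
  nlinarith

theorem Convex.exists_forall_norm_fderiv_le {s : Set X} (hs : Convex ℝ s)
    (hs_bdd : Bornology.IsBounded s) {a : X} {r : ℝ} (hr : 0 < r) (hball : closedBall a r ⊆ s)
    {K η : ℝ} (hK : 0 ≤ K) (hη : 0 < η) :
    ∃ δ > 0, ∀ h : X → F, (∀ x ∈ s, DifferentiableAt ℝ h x) → (∀ x ∈ s, ‖h x‖ ≤ δ) →
      (∀ x ∈ s, ∀ y ∈ s, ‖fderiv ℝ h x - fderiv ℝ h y‖ ≤ K * ‖x - y‖) →
      ∀ x ∈ s, ‖fderiv ℝ h x‖ ≤ η := by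
  -- `t` keeps the Lipschitz error `K t (r + diam s)` below `η / 2`, and `δ` is chosen so that
  -- `2 δ / (t r) = η / 2`.
  set t := min 1 (η / (2 * (K * (r + diam s)) + 1))
  have ht₀ : 0 < t := lt_min one_pos (by positivity)
  have hKt : 2 * (K * (r + diam s)) * t ≤ η := by
    have := (le_div_iff₀ (by positivity)).1 (min_le_right 1 (η / (2 * (K * (r + diam s)) + 1)))
    nlinarith
  refine ⟨η * t * r / 4, by positivity, fun h hd hδ hlip x hx => ?_⟩
  set y := x + t • (a - x)
  have hsub := hs.closedBall_add_smul_sub_subset hball hx ht₀ (min_le_left _ _)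
  have hy : y ∈ s := hsub (mem_closedBall_self (by positivity))
  have hxy : ‖x - y‖ ≤ t * diam s := by
    rw [sub_add_cancel_left, norm_neg, norm_smul, Real.norm_of_nonneg ht₀.le, ← dist_eq_norm]
    exact mul_le_mul_of_nonneg_left
      (dist_le_diam_of_mem hs_bdd (hball (mem_closedBall_self hr.le)) hx) ht₀.le
  have hy_bound : ‖fderiv ℝ h y‖ ≤ 2 * (η * t * r / 4) / (t * r) + K * (t * r) :=
    norm_fderiv_le_of_forall_mem_closedBall (by positivity) hK (fun z hz => hd z (hsub hz))
      (fun z hz => hδ z (hsub hz)) (fun z hz => hlip z (hsub hz) y hy)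
  have h2 : 2 * (η * t * r / 4) / (t * r) = η / 2 := by field_simp; ring
  calc ‖fderiv ℝ h x‖ ≤ ‖fderiv ℝ h y‖ + ‖fderiv ℝ h x - fderiv ℝ h y‖ :=
        norm_le_norm_add_norm_sub' _ _
    _ ≤ (η / 2 + K * (t * r)) + K * (t * diam s) :=
        add_le_add (h2 ▸ hy_bound) ((hlip x hx y hy).trans (by gcongr))
    _ ≤ η := by nlinarith

theorem UniformCauchySeqOn.uniformCauchySeqOn_fderiv {s : Set X} (hs_open : IsOpen s)
    (hs_conv : Convex ℝ s) (hs_bdd : Bornology.IsBounded s) {g : ℕ → X → F}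
    (hd : ∀ n, ∀ x ∈ s, DifferentiableAt ℝ (g n) x) {K : ℝ}
    (hlip : ∀ n, ∀ x ∈ s, ∀ y ∈ s, ‖fderiv ℝ (g n) x - fderiv ℝ (g n) y‖ ≤ K * ‖x - y‖)
    (hg : UniformCauchySeqOn g atTop s) :
    UniformCauchySeqOn (fun n => fderiv ℝ (g n)) atTop s := by
  rcases s.eq_empty_or_nonempty with rfl | ⟨a, ha⟩
  · simp [UniformCauchySeqOn]
  obtain ⟨r, hr, hball⟩ := nhds_basis_closedBall.mem_iff.1 (hs_open.mem_nhds ha)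
  rw [Metric.uniformCauchySeqOn_iff] at hg ⊢
  intro η hη
  obtain ⟨δ, hδ, hsmall⟩ := hs_conv.exists_forall_norm_fderiv_le (F := F) hs_bdd hr hball
    (by positivity : 0 ≤ 2 * max K 0) (half_pos hη)
  obtain ⟨N, hN⟩ := hg δ hδ
  refine ⟨N, fun m hm n hn x hx => ?_⟩
  have hsub : ∀ z ∈ s, fderiv ℝ (g m - g n) z = fderiv ℝ (g m) z - fderiv ℝ (g n) z :=
    fun z hz => fderiv_sub (hd m z hz) (hd n z hz)
  rw [dist_eq_norm, ← hsub x hx]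
  refine (hsmall _ (fun z hz => (hd m z hz).sub (hd n z hz))
    (fun z hz => by simpa only [Pi.sub_apply, dist_eq_norm] using (hN m hm n hn z hz).le)
    (fun z hz w hw => ?_) x hx).trans_lt (half_lt_self hη)
  rw [hsub z hz, hsub w hw, sub_sub_sub_comm]
  calc _ ≤ K * ‖z - w‖ + K * ‖z - w‖ := (norm_sub_le _ _).trans
        (add_le_add (hlip m z hz w hw) (hlip n z hz w hw))
    _ ≤ 2 * max K 0 * ‖z - w‖ := by
        nlinarith [le_max_left K 0, norm_nonneg (z - w)]

theorem UniformCauchySeqOn.differentiableAt_and_tendstoUniformlyOn_fderiv [CompleteSpace F]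
    {s : Set X} (hs : IsOpen s) {g : ℕ → X → F} {g₀ : X → F}
    (hd : ∀ n, ∀ x ∈ s, DifferentiableAt ℝ (g n) x)
    (hg : ∀ x ∈ s, Tendsto (fun n => g n x) atTop (𝓝 (g₀ x)))
    (hg' : UniformCauchySeqOn (fun n => fderiv ℝ (g n)) atTop s) :
    (∀ x ∈ s, DifferentiableAt ℝ g₀ x) ∧
      TendstoUniformlyOn (fun n => fderiv ℝ (g n)) (fderiv ℝ g₀) atTop s := by
  set G : X → X →L[ℝ] F := fun x => limUnder atTop fun n => fderiv ℝ (g n) x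
  have hU : TendstoUniformlyOn (fun n => fderiv ℝ (g n)) G atTop s :=
    hg'.tendstoUniformlyOn_of_tendsto fun x hx =>
      tendsto_nhds_limUnder (cauchySeq_tendsto_of_complete (hg'.cauchySeq hx))
  have hG : ∀ x ∈ s, HasFDerivAt g₀ (G x) x := fun x hx =>
    hasFDerivAt_of_tendstoUniformlyOn hs hU (fun n z hz => (hd n z hz).hasFDerivAt) hg hx
  exact ⟨fun x hx => (hG x hx).differentiableAt,
    hU.congr_right fun x hx => (hG x hx).fderiv.symm⟩

theorem TendstoUniformlyOn.differentiableAt_and_tendstoUniformlyOn_fderiv [CompleteSpace F]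
    {s : Set X} (hs_open : IsOpen s) (hs_conv : Convex ℝ s) (hs_bdd : Bornology.IsBounded s)
    {g : ℕ → X → F} {g₀ : X → F} (hd : ∀ n, ∀ x ∈ s, DifferentiableAt ℝ (g n) x) {K : ℝ}
    (hlip : ∀ n, ∀ x ∈ s, ∀ y ∈ s, ‖fderiv ℝ (g n) x - fderiv ℝ (g n) y‖ ≤ K * ‖x - y‖)
    (hg : TendstoUniformlyOn g g₀ atTop s) :
    (∀ x ∈ s, DifferentiableAt ℝ g₀ x) ∧
      TendstoUniformlyOn (fun n => fderiv ℝ (g n)) (fderiv ℝ g₀) atTop s :=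
  (hg.uniformCauchySeqOn.uniformCauchySeqOn_fderiv hs_open hs_conv hs_bdd hd hlip
    ).differentiableAt_and_tendstoUniformlyOn_fderiv hs_open hd fun _ hx => hg.tendsto_at hx

end

theorem TotallyBounded.tendstoUniformlyOn_of_dist_le {α β ι : Type*} [PseudoMetricSpace α]
    [PseudoMetricSpace β] {s : Set α} (hs : TotallyBounded s) {p : Filter ι} [p.NeBot]
    {g : ι → α → β} {g₀ : α → β} {K : ℝ}
    (hlip : ∀ i, ∀ x ∈ s, ∀ y ∈ s, dist (g i x) (g i y) ≤ K * dist x y)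
    (hg : ∀ x ∈ s, Tendsto (fun i => g i x) p (𝓝 (g₀ x))) : TendstoUniformlyOn g g₀ p s := by
  have hlip₀ : ∀ x ∈ s, ∀ y ∈ s, dist (g₀ x) (g₀ y) ≤ K * dist x y := fun x hx y hy =>
    le_of_tendsto ((hg x hx).dist (hg y hy)) (Eventually.of_forall fun i => hlip i x hx y hy)
  rw [Metric.tendstoUniformlyOn_iff]
  intro ε hε
  set δ := ε / (3 * (|K| + 1))
  have hδ : ∀ x y : α, dist x y < δ → K * dist x y < ε / 3 := fun x y hxy => by
    have : (|K| + 1) * δ = ε / 3 := by simp only [δ]; field_simp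
    nlinarith [le_abs_self K, abs_nonneg K, dist_nonneg (x := x) (y := y)]
  obtain ⟨t, hts, ht, hcover⟩ := finite_approx_of_totallyBounded hs δ (by positivity)
  have hnet : ∀ᶠ i in p, ∀ y ∈ t, dist (g₀ y) (g i y) < ε / 3 :=
    ht.eventually_all.2 fun y hy => (Metric.tendsto_nhds.1 (hg y (hts hy)) (ε / 3)
      (by positivity)).mono fun i hi => by rwa [dist_comm]
  filter_upwards [hnet] with i hi x hx
  obtain ⟨y, hy, hxy⟩ := mem_iUnion₂.1 (hcover hx)
  rw [mem_ball] at hxy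
  calc dist (g₀ x) (g i x) ≤ dist (g₀ x) (g₀ y) + dist (g₀ y) (g i y) + dist (g i y) (g i x) :=
        dist_triangle4 _ _ _ _
    _ < ε / 3 + ε / 3 + ε / 3 := by
        gcongr
        · exact (hlip₀ x hx y (hts hy)).trans_lt (hδ x y hxy)
        · exact hi y hy
        · exact (hlip i y (hts hy) x hx).trans_lt (hδ y x (by rwa [dist_comm]))
    _ = ε := by ring

theorem regular_convergence
    {D : ℕ} (E : Set (EuclideanSpace ℝ (Fin D)))
    (hEopen : IsOpen E) (hEconv : Convex ℝ E) (hEbdd : Bornology.IsBounded E)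
    (fn : ℕ → EuclideanSpace ℝ (Fin D) → ℝ)
    (hsmooth : ∀ n, ContDiffOn ℝ 3 (fn n) E)
    (hthird : ∃ C, ∀ (n : ℕ), ∀ x ∈ E, ‖iteratedFDeriv ℝ 3 (fn n) x‖ ≤ C) :
    ((∀ x ∈ E, ∃ M, ∀ n, |fn n x| ≤ M) →
      (∃ C, ∀ (n : ℕ), ∀ x ∈ E, ∀ y ∈ E,
          |fn n x - fn n y| ≤ C * ‖x - y‖ ∧
          ‖fderiv ℝ (fn n) x - fderiv ℝ (fn n) y‖ ≤ C * ‖x - y‖ ∧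
          ‖fderiv ℝ (fderiv ℝ (fn n)) x - fderiv ℝ (fderiv ℝ (fn n)) y‖ ≤ C * ‖x - y‖) ∧
      (∃ M, ∀ (n : ℕ), ∀ x ∈ E, |fn n x| ≤ M ∧ ‖fderiv ℝ (fn n) x‖ ≤ M ∧
          ‖fderiv ℝ (fderiv ℝ (fn n)) x‖ ≤ M)) ∧
    (∀ f : EuclideanSpace ℝ (Fin D) → ℝ,
      (∀ x ∈ E, Tendsto (fun n => fn n x) atTop (𝓝 (f x))) →
      (∀ x ∈ E, DifferentiableAt ℝ f x) ∧
      (∀ x ∈ E, DifferentiableAt ℝ (fderiv ℝ f) x) ∧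
      TendstoUniformlyOn (fun n x => fn n x) f atTop E ∧
      TendstoUniformlyOn (fun n x => fderiv ℝ (fn n) x) (fun x => fderiv ℝ f x) atTop E ∧
      TendstoUniformlyOn (fun n x => fderiv ℝ (fderiv ℝ (fn n)) x)
        (fun x => fderiv ℝ (fderiv ℝ f) x) atTop E) := by
  obtain ⟨C, hC⟩ := hthird
  have hd := fun n x (hx : x ∈ E) => (hsmooth n).differentiableAt_fderiv_fderiv hEopen hx
  have key (hpt : ∀ x ∈ E, ∃ M, ∀ n, |fn n x| ≤ M) :=
    exists_bound_and_lipschitz_of_norm_iteratedFDeriv_three_le hEopen hEconv hEbdd hsmooth hC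
      (by simpa only [Real.norm_eq_abs] using hpt)
  refine ⟨fun hpt => ?_, fun f hf => ?_⟩
  · obtain ⟨M, hM, hML⟩ := key hpt
    simp only [Real.norm_eq_abs] at hM hML
    exact ⟨⟨M, hML⟩, ⟨M, hM⟩⟩
  obtain ⟨M, -, hML⟩ := key fun x hx =>
    let ⟨B, hB⟩ := (hf x hx).abs.bddAbove_range
    ⟨B, fun n => hB ⟨n, rfl⟩⟩
  have hU₀ : TendstoUniformlyOn fn f atTop E :=
    (hEbdd.isCompact_closure.totallyBounded.subset subset_closure).tendstoUniformlyOn_of_dist_le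
      (fun n x hx y hy => by simpa only [dist_eq_norm] using (hML n x hx y hy).1) hf
  obtain ⟨hdf, hU₁⟩ := hU₀.differentiableAt_and_tendstoUniformlyOn_fderiv hEopen hEconv hEbdd
    (fun n x hx => (hd n x hx).1) fun n x hx y hy => (hML n x hx y hy).2.1
  obtain ⟨hdf', hU₂⟩ := hU₁.differentiableAt_and_tendstoUniformlyOn_fderiv hEopen hEconv hEbdd
    (fun n x hx => (hd n x hx).2.1) fun n x hx y hy => (hML n x hx y hy).2.2
  exact ⟨hdf, hdf', hU₀, hU₁, hU₂⟩
end

section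
/- Let $R_1, R_2, \ldots \subseteq \mathbb{R}^D$ be convex sets, and suppose $R_n \to R$ pointwise (i.e., $\mathbf{1}(x \in R_n) \to \mathbf{1}(x \in R)$ for every $x$) for some set $R \subseteq \mathbb{R}^D$ with $0 < m(R) < \infty$, where $m$ is Lebesgue measure. Then for any $\epsilon > 0$, setting $A = \{x : d(x, R^c) > \epsilon\}$ and $B = \{x : d(x, R) \le \epsilon\}$, we have $A \subseteq R_n \subseteq B$ for all sufficiently large $n$. -/
/-
Convexity is inherited by the pointwise limit `R`; having positive measure, `R` has an interior
point `c`. A convex set containing a ball `B(c, r)` and a point `x` contains the cone over the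
ball with apex `x`, hence about `d(x, c) / r` disjoint balls of radius `r / 2` along `[c, x]`; so
finite measure forces `R` to be bounded.

Inner inclusion: a compact set `K` in the interior of `R` lies, together with a `δ`-thickening, in
`R`; finitely many points of `R` then form a `δ`-net of that thickening, and a point all of whose
`δ`-ball is `δ`-close to a closed convex set `C` lies in `C` (project onto `C` and move away). Since
the net eventually lies in the convex `R_n`, so does `K`.

Outer inclusion: eventually `B(c, r) ⊆ R_n`. If `x ∈ R_n` is `2η`-far from `R`, the cone from `x`
over `B(c, r)` contains a ball of radius `ρ = r η / (2η + diam R)` centred on the compact shell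
`{y : d(y, R) = η}`. A finite `ρ`-net of the shell lies outside `R`, hence eventually outside
`R_n`, yet every such ball meets it.
-/

open MeasureTheory Filter Set Metric
open scoped Topology ENNReal

section Limit

variable {ι 𝕜 E : Type*} [Semiring 𝕜] [PartialOrder 𝕜] [AddCommMonoid E] [Module 𝕜 E]
  {l : Filter ι} [l.NeBot] {s : ι → Set E} {t : Set E}

theorem convex_of_eventually_mem_iff (hs : ∀ i, Convex 𝕜 (s i))
    (hlim : ∀ x, ∀ᶠ i in l, (x ∈ s i ↔ x ∈ t)) : Convex 𝕜 t := by
  intro x hx y hy a b ha hb hab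
  obtain ⟨i, hxi, hyi, hi⟩ := ((hlim x).and ((hlim y).and (hlim (a • x + b • y)))).exists
  exact hi.1 (hs i (hxi.2 hx) (hyi.2 hy) ha hb hab)

end Limit

section Normed

variable {E : Type*} [NormedAddCommGroup E] [NormedSpace ℝ E] {s t : Set E} {c x : E}
  {r τ η : ℝ}

theorem Convex.closedBall_homothety_subset (hs : Convex ℝ s) (hball : closedBall c r ⊆ s)
    (hx : x ∈ s) (hτ₀ : 0 ≤ τ) (hτ₁ : τ < 1) :
    closedBall (c + τ • (x - c)) ((1 - τ) * r) ⊆ s := by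
  intro p hp
  have hτ : 0 < 1 - τ := sub_pos.2 hτ₁
  set b := c + (1 - τ)⁻¹ • (p - (c + τ • (x - c)))
  have hb : b ∈ s := by
    refine hball (mem_closedBall_iff_norm.2 ?_)
    rw [add_sub_cancel_left, norm_smul, Real.norm_eq_abs, abs_of_pos (inv_pos.2 hτ),
      inv_mul_le_iff₀ hτ, ← dist_eq_norm]
    exact hp
  have hp : p = (1 - τ) • b + τ • x := by
    simp only [b, smul_add, smul_smul, mul_inv_cancel₀ hτ.ne', one_smul]
    module
  exact hp ▸ hs hb hx hτ.le hτ₀ (by ring)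

theorem exists_mem_Ico_infDist_segment_eq (hct : c ∈ t)
    (hη : 0 ≤ η) (hxt : η < infDist x t) :
    ∃ τ ∈ Ico (0 : ℝ) 1, infDist (c + τ • (x - c)) t = η := by
  have hf : Continuous fun τ : ℝ => infDist (c + τ • (x - c)) t := by fun_prop
  obtain ⟨τ, ⟨hτ₀, hτ₁⟩, hτ⟩ := intermediate_value_Icc zero_le_one hf.continuousOn
    (show η ∈ Icc _ _ by simp [infDist_zero_of_mem hct, hη, hxt.le])
  refine ⟨τ, ⟨hτ₀, hτ₁.lt_of_ne ?_⟩, hτ⟩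
  rintro rfl
  simp only [one_smul, add_sub_cancel] at hτ
  exact hxt.ne' hτ

theorem Convex.exists_closedBall_subset_infDist_eq (hs : Convex ℝ s) (hball : closedBall c r ⊆ s)
    (hr : 0 ≤ r) (hx : x ∈ s) (hct : c ∈ t) (ht : Bornology.IsBounded t) (hη : 0 < η)
    (hxt : 2 * η < infDist x t) :
    ∃ y, dist y c ≤ η + diam t ∧ infDist y t = η ∧
      closedBall y (r * η / (2 * η + diam t)) ⊆ s := by
  obtain ⟨τ, ⟨hτ₀, hτ₁⟩, hy⟩ := exists_mem_Ico_infDist_segment_eq hct hη.le (by linarith)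
  set y := c + τ • (x - c)
  have hyc : dist y c ≤ η + diam t := hy ▸ dist_le_infDist_add_diam ht hct
  have hxy : η ≤ dist x y := by linarith [infDist_le_infDist_add_dist (x := x) (y := y) (s := t)]
  have hxy' : dist x y = (1 - τ) * dist x c := by
    rw [dist_eq_norm, dist_eq_norm, show x - y = (1 - τ) • (x - c) by simp only [y]; module,
      norm_smul, Real.norm_of_nonneg (by linarith)]
  have hxc : dist x c ≤ dist x y + dist y c := dist_triangle _ _ _
  have hD := diam_nonneg (s := t)
  -- `1 - τ = dist x y / dist x c`, with `dist x y ≥ η` and `dist x c ≤ dist x y + η + diam t`.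
  have hτ : η ≤ (1 - τ) * (2 * η + diam t) := by
    have hL : 0 < dist x c := by nlinarith
    refine le_of_mul_le_mul_left ?_ hL
    nlinarith
  refine ⟨y, hyc, hy, (closedBall_subset_closedBall ?_).trans
    (hs.closedBall_homothety_subset hball hx hτ₀ hτ₁)⟩
  rw [div_le_iff₀ (by positivity)]
  nlinarith

end Normed

section Measure

variable {E : Type*} [NormedAddCommGroup E] [NormedSpace ℝ E] [MeasurableSpace E] [BorelSpace E]
  (μ : Measure E) [μ.IsAddHaarMeasure] {s : Set E} {c x : E} {r : ℝ}

theorem Convex.natCast_mul_measure_closedBall_le (hs : Convex ℝ s) (hball : closedBall c r ⊆ s)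
    (hr : 0 < r) (hx : x ∈ s) {N : ℕ} (hN : 4 * r * N ≤ dist x c) :
    N * μ (closedBall c (r / 2)) ≤ μ s := by
  rcases N.eq_zero_or_pos with rfl | hN₀
  · simp
  have hL : 0 < dist x c := lt_of_lt_of_le (by positivity) hN
  set a : ℕ → ℝ := fun j => 2 * r * j / dist x c
  set B : ℕ → Set E := fun j => closedBall (c + a j • (x - c)) (r / 2)
  have hBs : ∀ j < N, B j ⊆ s := by
    intro j hj
    have ha : a j ≤ 1 / 2 := by
      rw [div_le_iff₀ hL]
      have : (j : ℝ) ≤ N := by exact_mod_cast hj.le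
      nlinarith
    refine (closedBall_subset_closedBall ?_).trans
      (hs.closedBall_homothety_subset hball hx (by positivity) (by linarith))
    nlinarith
  have hdist : ∀ i j : ℕ, i < j → r < dist (c + a i • (x - c)) (c + a j • (x - c)) := by
    intro i j hij
    have hij' : (i : ℝ) + 1 ≤ j := by exact_mod_cast hij
    have ha : a j - a i = 2 * r * (j - i) / dist x c := by simp only [a]; ring
    rw [dist_add_left, dist_comm, dist_eq_norm, ← sub_smul, norm_smul, Real.norm_eq_abs,
      ← dist_eq_norm, ha, abs_of_pos (div_pos (by nlinarith) hL), div_mul_cancel₀ _ hL.ne']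
    nlinarith
  have hdisj : Pairwise (Function.onFun Disjoint B) := by
    refine (pairwise_disjoint_on B).2 fun i j hij => closedBall_disjoint_closedBall ?_
    linarith [hdist i j hij]
  calc N * μ (closedBall c (r / 2)) = ∑ j ∈ Finset.range N, μ (B j) := by
        simp [B, Measure.addHaar_closedBall_center]
    _ = μ (⋃ j ∈ Finset.range N, B j) :=
        (measure_biUnion_finset (fun i _ j _ hij => hdisj hij)
          (fun j _ => measurableSet_closedBall)).symm
    _ ≤ μ s := measure_mono (iUnion₂_subset fun j hj => hBs j (Finset.mem_range.1 hj))

theorem Convex.isBounded_of_measure_lt_top (hs : Convex ℝ s) (hball : closedBall c r ⊆ s)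
    (hr : 0 < r) (hfin : μ s < ∞) : Bornology.IsBounded s := by
  by_contra hunb
  have hv : μ (closedBall c (r / 2)) ≠ 0 := (measure_closedBall_pos μ c (by positivity)).ne'
  obtain ⟨N, hN⟩ := ENNReal.exists_nat_mul_gt hv hfin.ne
  obtain ⟨x, hx, hxN⟩ : ∃ x ∈ s, 4 * r * N ≤ dist x c := by
    by_contra! h
    exact hunb ((isBounded_iff_subset_closedBall c).2 ⟨4 * r * N, fun x hx => (h x hx).le⟩)
  exact (hN.trans_le (hs.natCast_mul_measure_closedBall_le μ hball hr hx hxN)).false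

theorem Convex.interior_nonempty_of_measure_pos [FiniteDimensional ℝ E] (hs : Convex ℝ s)
    (hpos : 0 < μ s) : (interior s).Nonempty := by
  rw [nonempty_iff_ne_empty]
  intro hint
  have : μ (closure s) = 0 := by
    rw [← hs.addHaar_frontier μ, frontier, hint, sdiff_empty]
  exact hpos.ne' (measure_mono_null subset_closure this)

end Measure

section InnerProduct

open scoped RealInnerProductSpace

variable {E : Type*} [NormedAddCommGroup E] [InnerProductSpace ℝ E]

theorem Convex.mem_of_forall_mem_closedBall_exists_dist_le [CompleteSpace E] {C : Set E}
    (hC : Convex ℝ C) (hCc : IsClosed C) {x : E} {ρ : ℝ} (hρ : 0 ≤ ρ)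
    (h : ∀ y ∈ closedBall x ρ, ∃ z ∈ C, dist y z ≤ ρ) : x ∈ C := by
  by_contra hx
  obtain ⟨z₀, hz₀, -⟩ := h x (mem_closedBall_self hρ)
  obtain ⟨p, hpC, hp⟩ := exists_norm_eq_iInf_of_complete_convex ⟨z₀, hz₀⟩ hCc.isComplete hC x
  have hsep := (norm_eq_iInf_iff_real_inner_le_zero hC hpC).1 hp
  set u := x - p
  have hu : 0 < ‖u‖ := norm_pos_iff.2 (sub_ne_zero.2 fun h => hx (h ▸ hpC))
  obtain ⟨z, hzC, hz⟩ := h (x + (ρ / ‖u‖) • u) (by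
    rw [mem_closedBall, dist_eq_norm, add_sub_cancel_left, norm_smul, Real.norm_of_nonneg
      (by positivity), div_mul_cancel₀ _ hu.ne'])
  -- `C` lies in the half-space `⟪u, · - p⟫ ≤ 0`, at distance `ρ + ‖u‖` from `x + (ρ / ‖u‖) • u`.
  have key : ⟪u, z - p⟫ = ⟪u, z - (x + (ρ / ‖u‖) • u)⟫ + ρ * ‖u‖ + ‖u‖ ^ 2 := by
    have : z - p = z - (x + (ρ / ‖u‖) • u) + (ρ / ‖u‖) • u + u := by simp only [u]; abel
    rw [this, inner_add_right, inner_add_right, real_inner_smul_right,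
      real_inner_self_eq_norm_sq]
    field_simp
  have hcs := abs_real_inner_le_norm u (z - (x + (ρ / ‖u‖) • u))
  rw [dist_comm, dist_eq_norm] at hz
  nlinarith [abs_le.1 hcs, hsep z hzC]

end InnerProduct

section Sequence

variable {E : Type*} [NormedAddCommGroup E] [InnerProductSpace ℝ E] [ProperSpace E]
  {ι : Type*} {l : Filter ι} {s : ι → Set E} {t : Set E}

theorem eventually_subset_of_isCompact_subset_interior (hs : ∀ i, Convex ℝ (s i))
    (hlim : ∀ x ∈ t, ∀ᶠ i in l, x ∈ s i) {K : Set E} (hK : IsCompact K)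
    (hKt : K ⊆ interior t) : ∀ᶠ i in l, K ⊆ s i := by
  obtain ⟨δ, hδ, hδt⟩ := hK.exists_cthickening_subset_open isOpen_interior hKt
  obtain ⟨Z, hZ, hZfin, hcover⟩ := (hK.cthickening (r := δ)).finite_cover_balls hδ
  have hZs : ∀ᶠ i in l, Z ⊆ s i :=
    hZfin.eventually_all.2 fun z hz => hlim z (interior_subset (hδt (hZ hz)))
  filter_upwards [hZs] with i hi x hx
  refine convexHull_min hi (hs i) <|
    (convex_convexHull ℝ Z).mem_of_forall_mem_closedBall_exists_dist_le
      (hZfin.isClosed_convexHull ℝ) hδ.le fun y hy => ?_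
  obtain ⟨z, hz, hyz⟩ := mem_iUnion₂.1 (hcover (closedBall_subset_cthickening hx δ hy))
  exact ⟨z, subset_convexHull ℝ Z hz, (mem_ball.1 hyz).le⟩

theorem eventually_subset_setOf_infDist_le (hs : ∀ i, Convex ℝ (s i))
    (hlim : ∀ x ∉ t, ∀ᶠ i in l, x ∉ s i) {c : E} {r : ℝ} (hr : 0 < r)
    (hball : ∀ᶠ i in l, closedBall c r ⊆ s i) (hct : c ∈ t) (ht : Bornology.IsBounded t)
    {ε : ℝ} (hε : 0 < ε) : ∀ᶠ i in l, s i ⊆ {x | infDist x t ≤ ε} := by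
  obtain ⟨η, hη, rfl⟩ : ∃ η, 0 < η ∧ ε = 2 * η := ⟨ε / 2, by positivity, by ring⟩
  have hρ : 0 < r * η / (2 * η + diam t) := by have := diam_nonneg (s := t); positivity
  have hC : IsCompact (closedBall c (η + diam t) ∩ {y | infDist y t = η}) :=
    (isCompact_closedBall _ _).inter_right (isClosed_eq (by fun_prop) continuous_const)
  obtain ⟨Z, hZC, hZfin, hcover⟩ := hC.finite_cover_balls hρ
  have hZs : ∀ᶠ i in l, ∀ z ∈ Z, z ∉ s i := by
    refine hZfin.eventually_all.2 fun z hz => hlim z fun hzt => hη.ne ?_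
    rw [← (hZC hz).2, infDist_zero_of_mem hzt]
  filter_upwards [hZs, hball] with i hZi hi x hx
  show infDist x t ≤ 2 * η
  by_contra! hxt
  obtain ⟨y, hyc, hy, hys⟩ := (hs i).exists_closedBall_subset_infDist_eq hi hr.le hx hct ht hη hxt
  obtain ⟨z, hz, hyz⟩ := mem_iUnion₂.1 (hcover ⟨mem_closedBall.2 hyc, hy⟩)
  exact hZi z hz (hys (mem_closedBall_comm.1 (mem_ball.1 hyz).le))

end Sequence

theorem squeeze_convex_sets
    {D : ℕ} (Rn : ℕ → Set (EuclideanSpace ℝ (Fin D)))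
    (R : Set (EuclideanSpace ℝ (Fin D)))
    (hconv : ∀ n, Convex ℝ (Rn n))
    (hlim : ∀ x, Tendsto (fun n => (Rn n).indicator (fun _ => (1:ℝ)) x) atTop
      (𝓝 (R.indicator (fun _ => (1:ℝ)) x)))
    (hpos : 0 < volume R) (hfin : volume R < ⊤) :
    ∀ ε > (0:ℝ), ∀ᶠ n in atTop,
      {x | ε < infDist x Rᶜ} ⊆ Rn n ∧ Rn n ⊆ {x | infDist x R ≤ ε} := by
  intro ε hε
  have hmem : ∀ x, ∀ᶠ n in atTop, (x ∈ Rn n ↔ x ∈ R) := fun x =>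
    (tendsto_indicator_const_apply_iff_eventually atTop (1 : ℝ) x).1 (hlim x)
  have hR : Convex ℝ R := convex_of_eventually_mem_iff hconv hmem
  obtain ⟨c, hc⟩ := hR.interior_nonempty_of_measure_pos volume hpos
  obtain ⟨r, hr, hcr⟩ := nhds_basis_closedBall.mem_iff.1 (isOpen_interior.mem_nhds hc)
  have hbdd := hR.isBounded_of_measure_lt_top volume (hcr.trans interior_subset) hr hfin
  have hin : ∀ x ∈ R, ∀ᶠ n in atTop, x ∈ Rn n := fun x hx => (hmem x).mono fun n hn => hn.2 hx
  have hout : ∀ x ∉ R, ∀ᶠ n in atTop, x ∉ Rn n :=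
    fun x hx => (hmem x).mono fun n hn h => hx (hn.1 h)
  have hKR : {x | ε ≤ infDist x Rᶜ} ⊆ interior R := fun x hx =>
    mem_interior_iff_mem_nhds.2 <|
      mem_of_superset (ball_mem_nhds x (hε.trans_le hx)) ball_infDist_compl_subset
  have hK : IsCompact {x | ε ≤ infDist x Rᶜ} :=
    isCompact_of_isClosed_isBounded (isClosed_le continuous_const (by fun_prop))
      (hbdd.subset (hKR.trans interior_subset))
  have hball :=
    eventually_subset_of_isCompact_subset_interior hconv hin (isCompact_closedBall c r) hcr
  filter_upwards [eventually_subset_of_isCompact_subset_interior hconv hin hK hKR,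
    eventually_subset_setOf_infDist_le hconv hout hr hball
      (interior_subset (hcr (mem_closedBall_self hr.le))) hbdd hε] with n hKn hn
  exact ⟨fun x hx => hKn (show ε ≤ _ from hx.le), hn⟩
end

section
/- Let $E \subseteq \mathbb{R}^D$ be open. Suppose $f_n : E \to \mathbb{R}$ have continuous third derivatives, $(f_n)$ is pointwise bounded, and the third-derivative tensors $(f_n''')$ are uniformly bounded on $E$ (in the Frobenius tensor norm). Then the Hessians $(f_n'')$ are pointwise bounded on $E$. -/
/-!
A second-order Taylor expansion with a third-order remainder gives, for small `w`,
`f''(x)(w, w) = f(x + w) + f(x - w) - 2 f(x) + O(C ‖w‖³)`, so for each small `w` the values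
`fₙ''(x)(w, w)` are bounded in `n`. By homogeneity and polarization (Hessians are symmetric) the
same holds for `fₙ''(x)(u, v)` with arbitrary `u, v`, and the uniform boundedness principle,
applied once to each argument of the bilinear maps `fₙ''(x)`, bounds their norms.
-/

open Filter Metric Set
open scoped Nat Topology

section Taylor

variable {E F : Type*} [NormedAddCommGroup E] [NormedSpace ℝ E]
  [NormedAddCommGroup F] [NormedSpace ℝ F] [CompleteSpace F]

theorem norm_sub_sum_iteratedFDeriv_le {f : E → F} {x y : E} {n : ℕ} {C : ℝ}
    (hf : ∀ t ∈ Icc (0 : ℝ) 1, ContDiffAt ℝ (n + 1) f (x + t • y))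
    (hC : ∀ t ∈ Icc (0 : ℝ) 1, ‖iteratedFDeriv ℝ (n + 1) f (x + t • y)‖ ≤ C) :
    ‖f (x + y) - ∑ k ∈ Finset.range (n + 1), (k ! : ℝ)⁻¹ • iteratedFDeriv ℝ k f x (fun _ ↦ y)‖
      ≤ C * ‖y‖ ^ (n + 1) / n ! := by
  have hint : ‖∫ t in (0 : ℝ)..1, (1 - t) ^ n • iteratedFDeriv ℝ (n + 1) f (x + t • y) (fun _ ↦ y)‖
      ≤ C * ‖y‖ ^ (n + 1) := by
    refine (intervalIntegral.norm_integral_le_of_norm_le_const fun t ht ↦ ?_).trans_eq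
      (by rw [sub_zero, abs_one, mul_one])
    rw [uIoc_of_le zero_le_one] at ht
    have hweight : ‖(1 - t) ^ n‖ ≤ 1 := by
      rw [norm_pow, Real.norm_of_nonneg (by linarith [ht.2])]
      exact pow_le_one₀ (by linarith [ht.2]) (by linarith [ht.1])
    have hderiv : ‖iteratedFDeriv ℝ (n + 1) f (x + t • y) (fun _ ↦ y)‖ ≤ C * ‖y‖ ^ (n + 1) :=
      (ContinuousMultilinearMap.le_opNorm_mul_pow_of_le _ (pi_norm_const_le y)).trans
        (by gcongr; exact hC t (Ioc_subset_Icc_self ht))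
    rw [norm_smul]
    simpa using mul_le_mul hweight hderiv (norm_nonneg _) zero_le_one
  rw [map_add_eq_sum_add_integral_iteratedFDeriv hf, add_sub_cancel_left, norm_smul,
    norm_inv, Real.norm_natCast, inv_mul_eq_div]
  gcongr

theorem add_smul_mem_closedBall {x y : E} {t : ℝ} (ht : t ∈ Icc (0 : ℝ) 1) :
    x + t • y ∈ closedBall x ‖y‖ := by
  rw [mem_closedBall_iff_norm, add_sub_cancel_left, norm_smul, Real.norm_of_nonneg ht.1]
  exact mul_le_of_le_one_left (norm_nonneg y) ht.2

theorem norm_sub_taylor_two_le {f : E → F} {x y : E} {C : ℝ}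
    (hf : ∀ z ∈ closedBall x ‖y‖, ContDiffAt ℝ 3 f z)
    (hC : ∀ z ∈ closedBall x ‖y‖, ‖iteratedFDeriv ℝ 3 f z‖ ≤ C) :
    ‖f (x + y) - (f x + fderiv ℝ f x y + (2 : ℝ)⁻¹ • fderiv ℝ (fderiv ℝ f) x y y)‖
      ≤ C * ‖y‖ ^ 3 / 2 := by
  have h := norm_sub_sum_iteratedFDeriv_le (n := 2)
    (fun t ht ↦ hf _ (add_smul_mem_closedBall ht)) (fun t ht ↦ hC _ (add_smul_mem_closedBall ht))
  simpa [Finset.sum_range_succ, iteratedFDeriv_two_apply] using h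

theorem norm_fderiv_fderiv_apply_self_le {f : E → F} {x w : E} {C : ℝ}
    (hf : ∀ z ∈ closedBall x ‖w‖, ContDiffAt ℝ 3 f z)
    (hC : ∀ z ∈ closedBall x ‖w‖, ‖iteratedFDeriv ℝ 3 f z‖ ≤ C) :
    ‖fderiv ℝ (fderiv ℝ f) x w w‖ ≤ ‖f (x + w) + f (x - w) - (2 : ℝ) • f x‖ + C * ‖w‖ ^ 3 := by
  have hplus := norm_sub_taylor_two_le hf hC
  have hminus := norm_sub_taylor_two_le (y := -w) (by rwa [norm_neg]) (by rwa [norm_neg])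
  rw [← sub_eq_add_neg, norm_neg] at hminus
  simp only [map_neg, neg_apply, neg_neg] at hminus
  calc ‖fderiv ℝ (fderiv ℝ f) x w w‖
      = ‖(f (x + w) + f (x - w) - (2 : ℝ) • f x)
          - ((f (x + w) - (f x + fderiv ℝ f x w + (2 : ℝ)⁻¹ • fderiv ℝ (fderiv ℝ f) x w w))
            + (f (x - w) - (f x + -fderiv ℝ f x w
              + (2 : ℝ)⁻¹ • fderiv ℝ (fderiv ℝ f) x w w)))‖ := by
        congr 1; module
    _ ≤ ‖f (x + w) + f (x - w) - (2 : ℝ) • f x‖ + (C * ‖w‖ ^ 3 / 2 + C * ‖w‖ ^ 3 / 2) :=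
        (norm_sub_le _ _).trans
          (add_le_add le_rfl ((norm_add_le _ _).trans (add_le_add hplus hminus)))
    _ = _ := by ring

end Taylor

section UniformBoundedness

variable {ι E F : Type*} [NormedAddCommGroup E] [NormedSpace ℝ E]
  [NormedAddCommGroup F] [NormedSpace ℝ F] {B : ι → E →L[ℝ] E →L[ℝ] F}

theorem forall_exists_bound_apply_self_of_eventually
    (h : ∀ᶠ w in 𝓝 (0 : E), ∃ M, ∀ i, ‖B i w w‖ ≤ M) (w : E) :
    ∃ M, ∀ i, ‖B i w w‖ ≤ M := by
  have hsmul : Tendsto (fun t : ℝ ↦ t • w) (𝓝[≠] 0) (𝓝 0) :=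
    ((continuous_id.smul continuous_const).tendsto' 0 0 (zero_smul ℝ w)).mono_left
      nhdsWithin_le_nhds
  obtain ⟨t, ⟨M, hM⟩, ht⟩ := ((hsmul.eventually h).and self_mem_nhdsWithin).exists
  refine ⟨M / ‖t‖ ^ 2, fun i ↦ ?_⟩
  rw [le_div_iff₀ (pow_pos (norm_pos_iff.2 ht) 2)]
  simpa [norm_smul, smul_smul, pow_two, mul_comm] using hM i

theorem forall_exists_bound_apply_of_forall_exists_bound_apply_self
    (hB : ∀ i u v, B i u v = B i v u) (h : ∀ w, ∃ M, ∀ i, ‖B i w w‖ ≤ M) (u v : E) :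
    ∃ M, ∀ i, ‖B i u v‖ ≤ M := by
  obtain ⟨M₁, hM₁⟩ := h (u + v)
  obtain ⟨M₂, hM₂⟩ := h (u - v)
  refine ⟨(M₁ + M₂) / 4, fun i ↦ ?_⟩
  have polarization : (4 : ℝ) • B i u v = B i (u + v) (u + v) - B i (u - v) (u - v) := by
    simp only [map_add, map_sub, add_apply, sub_apply, hB i v u]
    module
  have h4 : ‖(4 : ℝ) • B i u v‖ ≤ M₁ + M₂ :=
    polarization ▸ (norm_sub_le _ _).trans (add_le_add (hM₁ i) (hM₂ i))
  rw [norm_smul, Real.norm_ofNat] at h4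
  linarith

theorem banach_steinhaus_bilinear [CompleteSpace E] (h : ∀ u v, ∃ M, ∀ i, ‖B i u v‖ ≤ M) :
    ∃ M, ∀ i, ‖B i‖ ≤ M :=
  banach_steinhaus fun u ↦ banach_steinhaus (h u)

end UniformBoundedness

theorem hessians_pointwise_bounded
    {D : ℕ} (E : Set (EuclideanSpace ℝ (Fin D))) (hEopen : IsOpen E)
    (fn : ℕ → EuclideanSpace ℝ (Fin D) → ℝ)
    (hsmooth : ∀ n, ContDiffOn ℝ 3 (fn n) E)
    (hpt : ∀ x ∈ E, ∃ M, ∀ n, |fn n x| ≤ M)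
    (hthird : ∃ C, ∀ (n : ℕ), ∀ x ∈ E, ‖iteratedFDeriv ℝ 3 (fn n) x‖ ≤ C) :
    ∀ x ∈ E, ∃ M, ∀ n, ‖iteratedFDeriv ℝ 2 (fn n) x‖ ≤ M := by
  intro x hx
  obtain ⟨C, hC⟩ := hthird
  obtain ⟨δ, hδ, hball⟩ := Metric.isOpen_iff.1 hEopen x hx
  have hdiag : ∀ᶠ w in 𝓝 0, ∃ M, ∀ n, ‖fderiv ℝ (fderiv ℝ (fn n)) x w w‖ ≤ M := by
    filter_upwards [ball_mem_nhds 0 hδ] with w hw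
    have hsub : closedBall x ‖w‖ ⊆ E :=
      (closedBall_subset_ball (by simpa using hw)).trans hball
    obtain ⟨M₁, hM₁⟩ := hpt (x + w) (hsub (by simp))
    obtain ⟨M₂, hM₂⟩ := hpt (x - w) (hsub (by simp))
    obtain ⟨M₀, hM₀⟩ := hpt x hx
    refine ⟨M₁ + M₂ + 2 * M₀ + C * ‖w‖ ^ 3, fun n ↦ ?_⟩
    refine (norm_fderiv_fderiv_apply_self_le
      (fun z hz ↦ (hsmooth n).contDiffAt (hEopen.mem_nhds (hsub hz)))
      (fun z hz ↦ hC n z (hsub hz))).trans ?_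
    simp only [Real.norm_eq_abs, smul_eq_mul]
    have := abs_sub (fn n (x + w) + fn n (x - w)) (2 * fn n x)
    have := abs_add_le (fn n (x + w)) (fn n (x - w))
    rw [abs_mul, abs_two] at *
    linarith [hM₁ n, hM₂ n, hM₀ n]
  have hsymm : ∀ n u v, fderiv ℝ (fderiv ℝ (fn n)) x u v = fderiv ℝ (fderiv ℝ (fn n)) x v u :=
    fun n ↦ ((hsmooth n).contDiffAt (hEopen.mem_nhds hx)).isSymmSndFDerivAt (by norm_num)
  obtain ⟨M, hM⟩ := banach_steinhaus_bilinear
    (forall_exists_bound_apply_of_forall_exists_bound_apply_self hsymm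
      (forall_exists_bound_apply_self_of_eventually hdiag))
  exact ⟨M, fun n ↦ by rw [← norm_iteratedFDeriv_fderiv, norm_iteratedFDeriv_one]; exact hM n⟩
end

section
/- Let $E \subseteq \mathbb{R}^D$ be open, convex, and bounded. Let $f_n : E \to \mathbb{R}$ have continuous second derivatives, suppose $f_n \to f$ pointwise for some $f : E \to \mathbb{R}$, and suppose the Hessians $(f_n'')$ are uniformly bounded on $E$. Then the gradient $f'$ exists and is continuous on $E$, and $f_n' \to f'$ uniformly on $E$. -/
open Filter Set
open scoped Topology NNReal

/-!
The gradients of the `fn n` are equi-Lipschitz on the convex set `E`, with the Hessian bound as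
Lipschitz constant. A second-order Taylor estimate for `fn m - fn n` between `x` and `x + t • v`
bounds `t * ‖(fn m - fn n)' x v‖` by the values of `fn m - fn n` at these two points plus `O(t²)`;
choosing `t` small and then `m, n` large shows that the gradients are pointwise Cauchy (in finite
dimensions it suffices to test them on a basis). Being equi-Lipschitz, they are then uniformly
Cauchy on the totally bounded set `E`, and the uniform limit of the derivatives is the derivative
of the pointwise limit `f`.
-/

theorem TotallyBounded.uniformCauchySeqOn_of_lipschitzOnWith {α β ι : Type*}
    [PseudoMetricSpace α] [PseudoMetricSpace β] [Nonempty ι] [SemilatticeSup ι]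
    {F : ι → α → β} {s : Set α} (hs : TotallyBounded s) {K : ℝ≥0}
    (hF : ∀ n, LipschitzOnWith K (F n) s) (hcauchy : ∀ x ∈ s, CauchySeq fun n => F n x) :
    UniformCauchySeqOn F atTop s := by
  intro u hu
  obtain ⟨ε, hε, hεu⟩ := Metric.mem_uniformity_dist.1 hu
  set δ := ε / (3 * (K + 1))
  have hKδ : K * δ ≤ ε / 3 := by
    rw [mul_div_assoc', div_le_div_iff₀ (by positivity) (by positivity)]
    nlinarith
  obtain ⟨t, hts, htfin, hcover⟩ := Metric.finite_approx_of_totallyBounded hs δ (by positivity)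
  have hnet : ∀ᶠ p in atTop ×ˢ atTop, ∀ y ∈ t, dist (F p.1 y) (F p.2 y) < ε / 3 := by
    rw [prod_atTop_atTop_eq, eventually_all_finite htfin]
    exact fun y hy => (cauchySeq_iff_tendsto_dist_atTop_0.1 (hcauchy y (hts hy))).eventually
      (gt_mem_nhds (by positivity))
  filter_upwards [hnet] with p hp x hx
  obtain ⟨y, hy, hxy⟩ := mem_iUnion₂.1 (hcover hx)
  have hclose : ∀ n, dist (F n x) (F n y) ≤ ε / 3 := fun n =>
    ((hF n).dist_le_mul x hx y (hts hy)).trans <|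
      (mul_le_mul_of_nonneg_left (Metric.mem_ball.1 hxy).le K.coe_nonneg).trans hKδ
  apply hεu
  calc dist (F p.1 x) (F p.2 x)
      ≤ dist (F p.1 x) (F p.1 y) + dist (F p.1 y) (F p.2 y) + dist (F p.2 y) (F p.2 x) :=
        dist_triangle4 _ _ _ _
    _ < ε := by linarith [hclose p.1, hclose p.2, dist_comm (F p.2 y) (F p.2 x), hp y hy]

section

variable {E G : Type*} [NormedAddCommGroup E] [NormedSpace ℝ E]
  [NormedAddCommGroup G] [NormedSpace ℝ G]

theorem cauchySeq_of_forall_cauchySeq_apply [FiniteDimensional ℝ E] {ι : Type*} [Nonempty ι]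
    [SemilatticeSup ι] {L : ι → E →L[ℝ] G} (h : ∀ v, CauchySeq fun n => L n v) :
    CauchySeq L := by
  let b := Module.finBasis ℝ E
  obtain ⟨C, -, hC⟩ := b.exists_opNorm_le (F := G)
  simp only [cauchySeq_iff_tendsto_dist_atTop_0] at h ⊢
  have hsum := (tendsto_finsetSum Finset.univ fun i _ => h (b i)).const_mul C
  rw [Finset.sum_const_zero, mul_zero] at hsum
  refine squeeze_zero (fun _ => dist_nonneg) (fun p => ?_) hsum
  rw [dist_eq_norm]
  refine hC (Finset.sum_nonneg fun i _ => dist_nonneg) fun i => ?_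
  rw [sub_apply, ← dist_eq_norm]
  exact Finset.single_le_sum (f := fun i => dist (L p.1 (b i)) (L p.2 (b i)))
    (fun i _ => dist_nonneg) (Finset.mem_univ i)

theorem norm_fderiv_fderiv (f : E → G) (x : E) :
    ‖fderiv ℝ (fderiv ℝ f) x‖ = ‖iteratedFDeriv ℝ 2 f x‖ := by
  rw [← norm_iteratedFDeriv_one (𝕜 := ℝ), norm_iteratedFDeriv_fderiv]

theorem Convex.lipschitzOnWith_fderiv_of_norm_iteratedFDeriv_le {f : E → G} {s : Set E}
    (hs : Convex ℝ s) (hso : IsOpen s) (hf : ContDiffOn ℝ 2 f s) {C : ℝ≥0}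
    (hC : ∀ x ∈ s, ‖iteratedFDeriv ℝ 2 f x‖ ≤ C) : LipschitzOnWith C (fderiv ℝ f) s := by
  have hf' : ContDiffOn ℝ 1 (fderiv ℝ f) s := hf.fderiv_of_isOpen hso (by norm_num)
  refine hs.lipschitzOnWith_of_nnnorm_fderiv_le (𝕜 := ℝ) (fun x hx => ?_) fun x hx => ?_
  · exact (hf'.differentiableOn one_ne_zero x hx).differentiableAt (hso.mem_nhds hx)
  · rw [← NNReal.coe_le_coe, coe_nnnorm, norm_fderiv_fderiv]
    exact hC x hx

theorem Convex.norm_sub_sub_apply_le_of_lipschitzOnWith {f : E → G} {f' : E → E →L[ℝ] G}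
    {s : Set E} (hs : Convex ℝ s) (hf : ∀ x ∈ s, HasFDerivWithinAt f (f' x) s x) {K : ℝ≥0}
    (hf' : LipschitzOnWith K f' s) {x y : E} (hx : x ∈ s) (hy : y ∈ s) :
    ‖f y - f x - f' x (y - x)‖ ≤ K * ‖y - x‖ ^ 2 := by
  have hbound : ∀ w ∈ s ∩ Metric.closedBall x ‖y - x‖, ‖f' w - f' x‖ ≤ K * ‖y - x‖ :=
    fun w hw => by
      rw [← dist_eq_norm]
      exact (hf'.dist_le_mul w hw.1 x hx).trans (by gcongr; exact hw.2)
  calc ‖f y - f x - f' x (y - x)‖ ≤ K * ‖y - x‖ * ‖y - x‖ :=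
        (hs.inter (convex_closedBall x _)).norm_image_sub_le_of_norm_hasFDerivWithin_le'
          (fun w hw => (hf w hw.1).mono inter_subset_left) hbound
          ⟨hx, Metric.mem_closedBall_self (norm_nonneg _)⟩ ⟨hy, by simp [dist_eq_norm]⟩
    _ = K * ‖y - x‖ ^ 2 := by ring

theorem cauchySeq_fderiv_apply_of_lipschitzOnWith {f : ℕ → E → G} {f' : ℕ → E → E →L[ℝ] G}
    {s : Set E} (hso : IsOpen s) (hs : Convex ℝ s) (hf : ∀ n, ∀ x ∈ s, HasFDerivAt (f n) (f' n x) x)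
    {K : ℝ≥0} (hf' : ∀ n, LipschitzOnWith K (f' n) s)
    (hcauchy : ∀ x ∈ s, CauchySeq fun n => f n x) {x : E} (hx : x ∈ s) (v : E) :
    CauchySeq fun n => f' n x v := by
  rw [Metric.cauchySeq_iff]
  intro ε hε
  obtain ⟨t, hts, ht, htK⟩ : ∃ t, x + t • v ∈ s ∧ 0 < t ∧ 2 * K * t * ‖v‖ ^ 2 < ε / 2 := by
    have hmem : ∀ᶠ t : ℝ in 𝓝 0, x + t • v ∈ s :=
      (Continuous.tendsto' (by fun_prop) 0 x (by simp)).eventually (hso.mem_nhds hx)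
    have hsmall : ∀ᶠ t : ℝ in 𝓝 0, 2 * K * t * ‖v‖ ^ 2 < ε / 2 :=
      (Continuous.tendsto' (by fun_prop) 0 0 (by simp)).eventually (gt_mem_nhds (by positivity))
    exact ((hmem.and hsmall).filter_mono nhdsWithin_le_nhds |>.and self_mem_nhdsWithin).exists
      (f := 𝓝[>] 0) |>.imp fun t ⟨⟨h1, h2⟩, h3⟩ => ⟨h1, h3, h2⟩
  obtain ⟨N₁, hN₁⟩ := Metric.cauchySeq_iff.1 (hcauchy _ hts) (t * ε / 4) (by positivity)
  obtain ⟨N₂, hN₂⟩ := Metric.cauchySeq_iff.1 (hcauchy x hx) (t * ε / 4) (by positivity)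
  refine ⟨max N₁ N₂, fun m hm n hn => ?_⟩
  rw [ge_iff_le, max_le_iff] at hm hn
  set φ := f' m x - f' n x
  set a := f m (x + t • v) - f n (x + t • v)
  set b := f m x - f n x
  have htaylor : ‖a - b - t • φ v‖ ≤ t * (2 * K * t * ‖v‖ ^ 2) := by
    have h := hs.norm_sub_sub_apply_le_of_lipschitzOnWith (f := fun y => f m y - f n y)
      (fun y hy => ((hf m y hy).sub (hf n y hy)).hasFDerivWithinAt) ((hf' m).sub (hf' n)) hx hts
    rw [add_sub_cancel_left, map_smul, norm_smul, Real.norm_of_nonneg ht.le] at h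
    convert h using 1
    push_cast
    ring
  have hφ : t * ‖φ v‖ < t * ε :=
    calc t * ‖φ v‖ = ‖t • φ v‖ := by rw [norm_smul, Real.norm_of_nonneg ht.le]
      _ ≤ ‖a - b - t • φ v‖ + ‖a‖ + ‖b‖ := by
        have h₁ := norm_sub_le (a - b) (a - b - t • φ v)
        have h₂ := norm_sub_le a b
        rw [sub_sub_cancel] at h₁
        linarith
      _ < t * ε := by
        have h₁ := hN₁ m hm.1 n hn.1
        have h₂ := hN₂ m hm.2 n hn.2
        rw [dist_eq_norm] at h₁ h₂
        nlinarith
  rw [dist_eq_norm, ← sub_apply]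
  exact lt_of_mul_lt_mul_left hφ ht.le

end

theorem gradients_converge_uniformly
    {D : ℕ} (E : Set (EuclideanSpace ℝ (Fin D)))
    (hEopen : IsOpen E) (hEconv : Convex ℝ E) (hEbdd : Bornology.IsBounded E)
    (fn : ℕ → EuclideanSpace ℝ (Fin D) → ℝ) (f : EuclideanSpace ℝ (Fin D) → ℝ)
    (hsmooth : ∀ n, ContDiffOn ℝ 2 (fn n) E)
    (hlim : ∀ x ∈ E, Tendsto (fun n => fn n x) atTop (𝓝 (f x)))
    (hHess : ∃ C, ∀ (n : ℕ), ∀ x ∈ E, ‖iteratedFDeriv ℝ 2 (fn n) x‖ ≤ C) :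
    (∀ x ∈ E, DifferentiableAt ℝ f x) ∧
    ContinuousOn (fun x => fderiv ℝ f x) E ∧
    TendstoUniformlyOn (fun n x => fderiv ℝ (fn n) x) (fun x => fderiv ℝ f x) atTop E := by
  obtain ⟨C, hC⟩ := hHess
  have hderiv : ∀ n, ∀ x ∈ E, HasFDerivAt (fn n) (fderiv ℝ (fn n) x) x := fun n x hx =>
    (((hsmooth n).differentiableOn two_ne_zero x hx).differentiableAt
      (hEopen.mem_nhds hx)).hasFDerivAt
  have hlip : ∀ n, LipschitzOnWith C.toNNReal (fderiv ℝ (fn n)) E := fun n =>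
    hEconv.lipschitzOnWith_fderiv_of_norm_iteratedFDeriv_le hEopen (hsmooth n) fun x hx =>
      (hC n x hx).trans (Real.le_coe_toNNReal C)
  have hcauchy : ∀ x ∈ E, CauchySeq fun n => fderiv ℝ (fn n) x := fun x hx =>
    cauchySeq_of_forall_cauchySeq_apply <| cauchySeq_fderiv_apply_of_lipschitzOnWith hEopen
      hEconv hderiv hlip (fun y hy => (hlim y hy).cauchySeq) hx
  set g := fun x => limUnder atTop fun n => fderiv ℝ (fn n) x
  have hEtb : TotallyBounded E := hEbdd.isCompact_closure.totallyBounded.subset subset_closure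
  have hunif : TendstoUniformlyOn (fun n => fderiv ℝ (fn n)) g atTop E :=
    (hEtb.uniformCauchySeqOn_of_lipschitzOnWith hlip hcauchy).tendstoUniformlyOn_of_tendsto
      fun x hx => (hcauchy x hx).tendsto_limUnder
  have hfg : ∀ x ∈ E, HasFDerivAt f (g x) x := fun x hx =>
    hasFDerivAt_of_tendstoUniformlyOn hEopen hunif hderiv hlim hx
  have hfderiv : EqOn g (fderiv ℝ f) E := fun x hx => (hfg x hx).fderiv.symm
  refine ⟨fun x hx => (hfg x hx).differentiableAt, ?_, hunif.congr_right hfderiv⟩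
  refine (hunif.continuousOn (Frequently.of_forall fun n => ?_)).congr hfderiv.symm
  exact (hsmooth n).continuousOn_fderiv_of_isOpen hEopen one_le_two
end
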